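/- arXiv:1702.02662 — 6 statements merged into one kernel-verified Lean document; each statement's English description precedes it below -/
import Mathlib

section
/- Let k ≥ 2 be a positive integer and for each pair 1 ≤ i < j ≤ k let w_{i,j} be a non-negative real number, with S = Σ_{1 ≤ i < j ≤ k} w_{i,j}. Then there exists a partition A₁ ∪ A₂ ∪ A₃ ∪ A₄ = {1,…,k} into four (possibly empty) parts such that the sum over all pairs i, j lying in two different parts of w_{i,j} is at least ((3k² − 4)/(4k(k−1)))·S. -/
open Finset Equiv

section Aux
variable {α : Type*} [DecidableEq α] [Fintype α]

omit [Fintype α] in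
lemma aux_double_trans {a b a' b' : α} (hab : a ≠ b) (hab' : a' ≠ b') :
    ∃ τ : Equiv.Perm α, τ a = a' ∧ τ b = b' := by
  refine ⟨Equiv.swap (Equiv.swap a a' b) b' * Equiv.swap a a', ?_, ?_⟩
  · have h1 : Equiv.swap a a' b ≠ a' := by
      intro h
      exact hab ((Equiv.swap a a').injective (by rw [h, Equiv.swap_apply_left])).symm
    simp only [Equiv.Perm.mul_apply, Equiv.swap_apply_left]
    exact Equiv.swap_apply_of_ne_of_ne (Ne.symm h1) hab'
  · simp [Equiv.Perm.mul_apply]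

lemma aux_count_eq {i j a b a' b' : α} (hab : a ≠ b) (hab' : a' ≠ b') :
    (univ.filter fun σ : Equiv.Perm α => σ i = a ∧ σ j = b).card
      = (univ.filter fun σ : Equiv.Perm α => σ i = a' ∧ σ j = b').card := by
  obtain ⟨τ, h1, h2⟩ := aux_double_trans hab hab'
  apply Finset.card_nbij' (fun σ => τ * σ) (fun σ => τ⁻¹ * σ)
  · intro σ hσ
    simp only [Finset.mem_coe, mem_filter, mem_univ, true_and] at hσ ⊢
    simp [Equiv.Perm.mul_apply, hσ.1, hσ.2, h1, h2]
  · intro σ hσ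
    simp only [Finset.mem_coe, mem_filter, mem_univ, true_and] at hσ ⊢
    constructor
    · rw [Equiv.Perm.mul_apply, hσ.1, ← h1]; simp
    · rw [Equiv.Perm.mul_apply, hσ.2, ← h2]; simp
  · intro σ _; simp [← mul_assoc]
  · intro σ _; simp [← mul_assoc]

lemma aux_perm_count (f : α → Fin 4) {i j : α} (hij : i ≠ j) :
    ∃ N : ℕ,
      (univ : Finset (Equiv.Perm α)).card
        = ((univ ×ˢ univ).filter fun q : α × α => q.1 ≠ q.2).card * N ∧
      (univ.filter fun σ : Equiv.Perm α => f (σ i) = f (σ j)).card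
        = (((univ ×ˢ univ).filter fun q : α × α => q.1 ≠ q.2 ∧ f q.1 = f q.2).card) * N := by
  refine ⟨(univ.filter fun σ : Equiv.Perm α => σ i = i ∧ σ j = j).card, ?_, ?_⟩
  · rw [Finset.card_eq_sum_card_fiberwise
      (f := fun σ : Equiv.Perm α => (σ i, σ j))
      (t := (univ ×ˢ univ).filter fun q : α × α => q.1 ≠ q.2)]
    · rw [Finset.sum_congr rfl (fun q hq => ?_), Finset.sum_const, smul_eq_mul]
      simp only [mem_filter, mem_product] at hq
      have : (univ.filter fun σ : Equiv.Perm α => (σ i, σ j) = q).card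
          = (univ.filter fun σ : Equiv.Perm α => σ i = q.1 ∧ σ j = q.2).card := by
        congr 1; apply filter_congr; intro σ _; simp [Prod.ext_iff]
      rw [this]
      exact aux_count_eq hq.2 hij
    · intro σ _
      simp only [Finset.mem_coe, mem_filter, mem_product, mem_univ, true_and]
      exact fun h => hij (σ.injective h)
  · rw [Finset.card_eq_sum_card_fiberwise
      (f := fun σ : Equiv.Perm α => (σ i, σ j))
      (s := univ.filter fun σ : Equiv.Perm α => f (σ i) = f (σ j))
      (t := (univ ×ˢ univ).filter fun q : α × α => q.1 ≠ q.2 ∧ f q.1 = f q.2)]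
    · rw [Finset.sum_congr rfl (fun q hq => ?_), Finset.sum_const, smul_eq_mul]
      simp only [mem_filter, mem_product] at hq
      have : ((univ.filter fun σ : Equiv.Perm α => f (σ i) = f (σ j)).filter
            fun σ => (σ i, σ j) = q).card
          = (univ.filter fun σ : Equiv.Perm α => σ i = q.1 ∧ σ j = q.2).card := by
        rw [filter_filter]
        congr 1; apply filter_congr; intro σ _
        simp only [Prod.ext_iff]
        constructor
        · exact fun h => h.2
        · rintro ⟨h1, h2⟩; exact ⟨by rw [h1, h2]; exact hq.2.2, h1, h2⟩
      rw [this]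
      exact aux_count_eq hq.2.1 hij
    · intro σ hσ
      simp only [Finset.mem_coe, mem_filter, mem_univ, true_and] at hσ
      simp only [Finset.mem_coe, mem_filter, mem_product, mem_univ, true_and]
      exact ⟨fun h => hij (σ.injective h), hσ⟩

lemma aux_diag_card :
    ((univ ×ˢ univ).filter fun q : α × α => q.1 = q.2).card = Fintype.card α := by
  rw [← Finset.card_univ]
  apply Finset.card_nbij' (fun q => q.1) (fun a => (a, a)) <;> simp +contextual [Prod.ext_iff, Set.LeftInvOn, Set.RightInvOn, Set.EqOn]

lemma aux_ne_card :
    ((univ ×ˢ univ).filter fun q : α × α => q.1 ≠ q.2).card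
      = Fintype.card α * Fintype.card α - Fintype.card α := by
  have h := Finset.card_filter_add_card_filter_not
    (s := (univ ×ˢ univ : Finset (α × α))) (p := fun q => q.1 = q.2)
  rw [aux_diag_card, Finset.card_product, Finset.card_univ] at h
  have h2 : Fintype.card α ≤ Fintype.card α * Fintype.card α :=
    by nlinarith [Fintype.card α]
  simp only [ne_eq]
  omega

end Aux

lemma aux_mod_count (k t : ℕ) (ht : t < 4) :
    ((Finset.range k).filter fun a => a % 4 = t).card = (k + 3 - t) / 4 := by
  induction k with
  | zero => simp; omega
  | succ n ih =>
    rw [Finset.range_add_one, Finset.filter_insert]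
    by_cases h : n % 4 = t
    · rw [if_pos h, Finset.card_insert_of_notMem (by simp)]
      omega
    · rw [if_neg h]
      omega

lemma aux_arith (k : ℕ) :
    4 * (((k+3)/4)^2 + ((k+2)/4)^2 + ((k+1)/4)^2 + (k/4)^2) ≤ k*k + 4 := by
  obtain ⟨m, r, hr4, rfl⟩ : ∃ m r, r < 4 ∧ k = 4*m+r := ⟨k/4, k%4, by omega, by omega⟩
  interval_cases r
  · have e1 : (4*m+0+3)/4 = m := by omega
    have e2 : (4*m+0+2)/4 = m := by omega
    have e3 : (4*m+0+1)/4 = m := by omega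
    have e4 : (4*m+0)/4 = m := by omega
    rw [e1, e2, e3, e4]; nlinarith
  · have e1 : (4*m+1+3)/4 = m+1 := by omega
    have e2 : (4*m+1+2)/4 = m := by omega
    have e3 : (4*m+1+1)/4 = m := by omega
    have e4 : (4*m+1)/4 = m := by omega
    rw [e1, e2, e3, e4]; nlinarith
  · have e1 : (4*m+2+3)/4 = m+1 := by omega
    have e2 : (4*m+2+2)/4 = m+1 := by omega
    have e3 : (4*m+2+1)/4 = m := by omega
    have e4 : (4*m+2)/4 = m := by omega
    rw [e1, e2, e3, e4]; nlinarith
  · have e1 : (4*m+3+3)/4 = m+1 := by omega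
    have e2 : (4*m+3+2)/4 = m+1 := by omega
    have e3 : (4*m+3+1)/4 = m+1 := by omega
    have e4 : (4*m+3)/4 = m := by omega
    rw [e1, e2, e3, e4]; nlinarith

lemma aux_fin_mod_count (k t : ℕ) (ht : t < 4) :
    ((univ : Finset (Fin k)).filter fun a => a.val % 4 = t).card = (k + 3 - t) / 4 := by
  have hc : ((univ : Finset (Fin k)).filter fun a => a.val % 4 = t).card
      = ((Finset.range k).filter fun a => a % 4 = t).card := by
    apply Finset.card_nbij (i := fun a : Fin k => (a : ℕ))
    · intro a ha; simp only [Finset.mem_coe, mem_filter, mem_univ, true_and, mem_range] at ha ⊢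
      exact ⟨a.isLt, ha⟩
    · intro a ha b hb h; exact Fin.ext h
    · intro b hb
      simp only [coe_filter, mem_range, Set.mem_image, Set.mem_setOf_eq] at hb ⊢
      exact ⟨⟨b, hb.1⟩, ⟨Finset.mem_univ _, hb.2⟩, rfl⟩
  rw [hc, aux_mod_count k t ht]

lemma aux_Q_bound (k : ℕ) :
    4 * (((univ ×ˢ univ : Finset (Fin k × Fin k)).filter
        fun q => q.1 ≠ q.2 ∧ q.1.val % 4 = q.2.val % 4).card) + 4 * k ≤ k * k + 4 := by
  have hQall : ((univ ×ˢ univ : Finset (Fin k × Fin k)).filter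
        fun q => q.1.val % 4 = q.2.val % 4).card
      = ((k+3)/4)^2 + ((k+2)/4)^2 + ((k+1)/4)^2 + (k/4)^2 := by
    rw [Finset.card_eq_sum_card_fiberwise
      (f := fun q : Fin k × Fin k => q.1.val % 4) (t := Finset.range 4)
      (fun q _ => by simp [Nat.mod_lt _ (by norm_num : (0:ℕ) < 4)])]
    have hfib : ∀ t ∈ Finset.range 4,
        (((univ ×ˢ univ : Finset (Fin k × Fin k)).filter
            fun q => q.1.val % 4 = q.2.val % 4).filter
          fun q => q.1.val % 4 = t).card = ((k + 3 - t) / 4)^2 := by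
      intro t ht
      rw [Finset.filter_filter]
      have : ((univ ×ˢ univ : Finset (Fin k × Fin k)).filter
            fun q => (q.1.val % 4 = q.2.val % 4) ∧ q.1.val % 4 = t)
          = ((univ : Finset (Fin k)).filter fun a => a.val % 4 = t)
              ×ˢ ((univ : Finset (Fin k)).filter fun a => a.val % 4 = t) := by
        ext q
        simp only [mem_filter, mem_product, mem_univ, true_and]
        constructor
        · rintro ⟨h1, h2⟩; exact ⟨h2, by omega⟩
        · rintro ⟨h1, h2⟩; exact ⟨by omega, h1⟩
      rw [this, Finset.card_product, aux_fin_mod_count k t (Finset.mem_range.mp ht), sq]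
    rw [Finset.sum_congr rfl hfib]
    simp [Finset.sum_range_succ]
  have hdiag : (((univ ×ˢ univ : Finset (Fin k × Fin k)).filter
        fun q => q.1.val % 4 = q.2.val % 4).filter fun q => q.1 = q.2).card = k := by
    have he : (((univ ×ˢ univ : Finset (Fin k × Fin k)).filter
          fun q => q.1.val % 4 = q.2.val % 4).filter fun q => q.1 = q.2)
        = (univ ×ˢ univ : Finset (Fin k × Fin k)).filter fun q => q.1 = q.2 := by
      rw [Finset.filter_filter]
      ext q; simp only [mem_filter, mem_product, mem_univ, true_and]
      constructor
      · rintro ⟨_, h⟩; exact h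
      · intro h; exact ⟨by rw [h], h⟩
    rw [he, aux_diag_card]
    simp
  have hsplit := Finset.card_filter_add_card_filter_not
    (s := (univ ×ˢ univ : Finset (Fin k × Fin k)).filter
        fun q => q.1.val % 4 = q.2.val % 4) (p := fun q => q.1 = q.2)
  rw [hdiag, hQall] at hsplit
  have hQeq : (((univ ×ˢ univ : Finset (Fin k × Fin k)).filter
        fun q => q.1.val % 4 = q.2.val % 4).filter fun q => ¬ q.1 = q.2)
      = ((univ ×ˢ univ : Finset (Fin k × Fin k)).filter
        fun q => q.1 ≠ q.2 ∧ q.1.val % 4 = q.2.val % 4) := by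
    rw [Finset.filter_filter]
    apply Finset.filter_congr
    intro q _
    simp [and_comm]
  rw [hQeq] at hsplit
  have := aux_arith k
  omega

/-- Lemma: for non-negative weights `w i j` on pairs `1 ≤ i < j ≤ k` with total sum `S`,
there is a partition `A₁ ∪ A₂ ∪ A₃ ∪ A₄ = {1,…,k}` such that the total weight of pairs whose
two elements lie in different parts is at least `((3k² - 4)/(4k(k-1))) S`. -/
theorem exists_four_partition_crossing_weight (k : ℕ) (hk : 2 ≤ k) (w : ℕ → ℕ → ℝ)
    (hw : ∀ i j, 1 ≤ i → i < j → j ≤ k → 0 ≤ w i j) (S : ℝ)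
    (hS : S = ∑ p ∈ ((Finset.Icc 1 k) ×ˢ (Finset.Icc 1 k)).filter (fun p => p.1 < p.2),
      w p.1 p.2) :
    ∃ A : Fin 4 → Finset ℕ,
      (∀ l m : Fin 4, l ≠ m → Disjoint (A l) (A m)) ∧
      (A 0 ∪ A 1 ∪ A 2 ∪ A 3 = Finset.Icc 1 k) ∧
      ((3 * (k : ℝ) ^ 2 - 4) / (4 * (k : ℝ) * ((k : ℝ) - 1))) * S ≤
        ∑ p ∈ ((Finset.Icc 1 k) ×ˢ (Finset.Icc 1 k)).filter
            (fun p => p.1 < p.2 ∧ ∀ l : Fin 4, ¬(p.1 ∈ A l ∧ p.2 ∈ A l)), w p.1 p.2 := by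
  have hk0 : 0 < k := by omega
  set c : ℝ := (3 * (k : ℝ) ^ 2 - 4) / (4 * (k : ℝ) * ((k : ℝ) - 1)) with hc
  set ι : ℕ → Fin k := fun x => ⟨(x - 1) % k, Nat.mod_lt _ hk0⟩ with hι
  set f : Fin k → Fin 4 := fun a => ⟨a.val % 4, Nat.mod_lt _ (by norm_num)⟩ with hf
  set P : Finset (ℕ × ℕ) :=
    ((Finset.Icc 1 k) ×ˢ (Finset.Icc 1 k)).filter (fun p => p.1 < p.2) with hP
  -- basic facts about members of P
  have hPmem : ∀ p ∈ P, 1 ≤ p.1 ∧ p.1 < p.2 ∧ p.2 ≤ k := by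
    intro p hp
    simp only [hP, mem_filter, mem_product, Finset.mem_Icc] at hp
    exact ⟨hp.1.1.1, hp.2, hp.1.2.2⟩
  have hwP : ∀ p ∈ P, 0 ≤ w p.1 p.2 := fun p hp => by
    obtain ⟨h1, h2, h3⟩ := hPmem p hp; exact hw _ _ h1 h2 h3
  have hιval : ∀ x, 1 ≤ x → x ≤ k → (ι x).val = x - 1 := by
    intro x h1 h2
    simp only [hι]
    exact Nat.mod_eq_of_lt (by omega)
  have hιne : ∀ p ∈ P, ι p.1 ≠ ι p.2 := by
    intro p hp
    obtain ⟨h1, h2, h3⟩ := hPmem p hp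
    intro h
    have := congrArg Fin.val h
    rw [hιval _ h1 (by omega), hιval _ (by omega) h3] at this
    omega
  -- per-pair counting bound
  have key : ∀ i j : Fin k, i ≠ j →
      c * ((univ : Finset (Equiv.Perm (Fin k))).card : ℝ)
        ≤ ((univ.filter fun σ : Equiv.Perm (Fin k) => f (σ i) ≠ f (σ j)).card : ℝ) := by
    intro i j hij
    obtain ⟨N, hT, hM⟩ := aux_perm_count f hij
    have hN1 : 1 ≤ N := by
      rcases Nat.eq_zero_or_pos N with h | h
      · rw [h, mul_zero] at hT
        have hpos := Finset.card_pos.mpr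
          (Finset.univ_nonempty : (univ : Finset (Equiv.Perm (Fin k))).Nonempty)
        omega
      · exact h
    have hQc : (((univ ×ˢ univ).filter fun q : Fin k × Fin k =>
          q.1 ≠ q.2 ∧ f q.1 = f q.2).card)
        = (((univ ×ˢ univ : Finset (Fin k × Fin k)).filter
          fun q => q.1 ≠ q.2 ∧ q.1.val % 4 = q.2.val % 4).card) := by
      congr 1
      apply Finset.filter_congr
      intro q _
      simp [hf, Fin.ext_iff]
    have hQ := aux_Q_bound k
    rw [hQc] at hM
    set Q := (((univ ×ˢ univ : Finset (Fin k × Fin k)).filter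
        fun q => q.1 ≠ q.2 ∧ q.1.val % 4 = q.2.val % 4).card) with hQdef
    have hPd : ((univ ×ˢ univ).filter fun q : Fin k × Fin k => q.1 ≠ q.2).card
        = k * k - k := by rw [aux_ne_card, Fintype.card_fin]
    rw [hPd] at hT
    have hsplit := Finset.card_filter_add_card_filter_not
      (s := (univ : Finset (Equiv.Perm (Fin k))))
      (p := fun σ => f (σ i) = f (σ j))
    have hne : (univ.filter fun σ : Equiv.Perm (Fin k) => ¬ f (σ i) = f (σ j))
        = (univ.filter fun σ : Equiv.Perm (Fin k) => f (σ i) ≠ f (σ j)) := by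
      simp [ne_eq]
    rw [hne, hM, hT] at hsplit
    -- now real arithmetic
    have hkk : k ≤ k * k := Nat.le_mul_of_pos_left _ hk0
    have hQle : 4 * Q + 4 * k ≤ k * k + 4 := hQ
    rw [hT]
    have hcast : ((k * k - k : ℕ) : ℝ) = (k : ℝ) * k - k := by
      push_cast [Nat.cast_sub hkk]; ring
    have hker : ((univ.filter fun σ : Equiv.Perm (Fin k) =>
        f (σ i) ≠ f (σ j)).card : ℝ)
        = ((k * k - k : ℕ) : ℝ) * N - Q * N := by
      have := congrArg (fun n : ℕ => (n : ℝ)) hsplit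
      push_cast at this ⊢
      linarith
    rw [hker]
    push_cast
    rw [hcast]
    set x : ℝ := (k : ℝ) * k - k with hx
    have hxpos : 0 < x := by
      have h2 : (2 : ℝ) ≤ (k : ℝ) := by exact_mod_cast hk
      nlinarith
    have hNpos : (0:ℝ) < N := by exact_mod_cast hN1
    have hQr : 4 * (Q : ℝ) + 4 * k ≤ (k:ℝ) * k + 4 := by exact_mod_cast hQle
    have h2 : (2 : ℝ) ≤ (k : ℝ) := by exact_mod_cast hk
    have hden : 4 * (k : ℝ) * ((k : ℝ) - 1) = 4 * x := by rw [hx]; ring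
    rw [hc, hden, div_mul_eq_mul_div, div_le_iff₀ (by linarith)]
    have hfac : 3 * (k:ℝ)^2 - 4 + 4 * Q ≤ 4 * x := by
      rw [hx]; nlinarith
    nlinarith [mul_nonneg (mul_nonneg hxpos.le hNpos.le)
      (by linarith : (0:ℝ) ≤ 4 * x - (3 * (k:ℝ)^2 - 4) - 4 * Q)]
  -- averaging over permutations
  have havg : ∃ σ : Equiv.Perm (Fin k), c * S ≤
      ∑ p ∈ P.filter (fun p => f (σ (ι p.1)) ≠ f (σ (ι p.2))), w p.1 p.2 := by
    have hne : (univ : Finset (Equiv.Perm (Fin k))).Nonempty := univ_nonempty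
    have hsum : ∑ _σ ∈ (univ : Finset (Equiv.Perm (Fin k))), c * S
        ≤ ∑ σ ∈ (univ : Finset (Equiv.Perm (Fin k))),
            ∑ p ∈ P.filter (fun p => f (σ (ι p.1)) ≠ f (σ (ι p.2))), w p.1 p.2 := by
      have hrw : ∀ σ : Equiv.Perm (Fin k),
          ∑ p ∈ P.filter (fun p => f (σ (ι p.1)) ≠ f (σ (ι p.2))), w p.1 p.2
            = ∑ p ∈ P, if f (σ (ι p.1)) ≠ f (σ (ι p.2)) then w p.1 p.2 else 0 := by
        intro σ; rw [Finset.sum_filter]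
      simp only [hrw]
      rw [Finset.sum_comm]
      rw [Finset.sum_const, nsmul_eq_mul]
      have hinner : ∀ p ∈ P,
          c * ((univ : Finset (Equiv.Perm (Fin k))).card : ℝ) * w p.1 p.2
            ≤ ∑ σ ∈ (univ : Finset (Equiv.Perm (Fin k))),
                if f (σ (ι p.1)) ≠ f (σ (ι p.2)) then w p.1 p.2 else 0 := by
        intro p hp
        have : ∑ σ ∈ (univ : Finset (Equiv.Perm (Fin k))),
            (if f (σ (ι p.1)) ≠ f (σ (ι p.2)) then w p.1 p.2 else 0)
            = ((univ.filter fun σ : Equiv.Perm (Fin k) =>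
                f (σ (ι p.1)) ≠ f (σ (ι p.2))).card : ℝ) * w p.1 p.2 := by
          rw [← Finset.sum_filter, Finset.sum_const, nsmul_eq_mul]
        rw [this]
        exact mul_le_mul_of_nonneg_right (key _ _ (hιne p hp)) (hwP p hp)
      calc ((univ : Finset (Equiv.Perm (Fin k))).card : ℝ) * (c * S)
          = ∑ p ∈ P, c * ((univ : Finset (Equiv.Perm (Fin k))).card : ℝ) * w p.1 p.2 := by
            rw [hS, Finset.mul_sum, Finset.mul_sum]
            apply Finset.sum_congr rfl
            intro p _; ring
        _ ≤ _ := Finset.sum_le_sum hinner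
    obtain ⟨σ, _, hσ⟩ := Finset.exists_le_of_sum_le hne hsum
    exact ⟨σ, hσ⟩
  obtain ⟨σ, hσ⟩ := havg
  refine ⟨fun l => (Finset.Icc 1 k).filter (fun x => f (σ (ι x)) = l), ?_, ?_, ?_⟩
  · intro l m hlm
    rw [Finset.disjoint_left]
    intro x hx hx'
    simp only [mem_filter] at hx hx'
    exact hlm (hx.2 ▸ hx'.2 ▸ rfl)
  · ext x
    simp only [Finset.mem_union, mem_filter]
    constructor
    · rintro (((⟨h, _⟩ | ⟨h, _⟩) | ⟨h, _⟩) | ⟨h, _⟩) <;> exact h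
    · intro hx
      have h4 : ∀ t : Fin 4, t = 0 ∨ t = 1 ∨ t = 2 ∨ t = 3 := by decide
      rcases h4 (f (σ (ι x))) with h | h | h | h
      · exact Or.inl (Or.inl (Or.inl ⟨hx, h⟩))
      · exact Or.inl (Or.inl (Or.inr ⟨hx, h⟩))
      · exact Or.inl (Or.inr ⟨hx, h⟩)
      · exact Or.inr ⟨hx, h⟩
  · have hset : ((Finset.Icc 1 k) ×ˢ (Finset.Icc 1 k)).filter
        (fun p => p.1 < p.2 ∧ ∀ l : Fin 4,
          ¬(p.1 ∈ (Finset.Icc 1 k).filter (fun x => f (σ (ι x)) = l) ∧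
            p.2 ∈ (Finset.Icc 1 k).filter (fun x => f (σ (ι x)) = l)))
        = P.filter (fun p => f (σ (ι p.1)) ≠ f (σ (ι p.2))) := by
      rw [hP, Finset.filter_filter]
      apply Finset.filter_congr
      intro p hp
      simp only [mem_product, Finset.mem_Icc] at hp
      simp only [mem_filter, Finset.mem_Icc]
      constructor
      · rintro ⟨h1, h2⟩
        refine ⟨h1, fun heq => h2 (f (σ (ι p.1))) ⟨⟨hp.1, rfl⟩, ⟨hp.2, heq.symm⟩⟩⟩
      · rintro ⟨h1, h2⟩
        refine ⟨h1, fun l hl => h2 ?_⟩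
        rw [hl.1.2, hl.2.2]
    rw [hset]
    exact hσ
end

section
/- Let G be a simple graph with n ≥ 3 vertices and m edges with m/(n−1) ≥ 3, set s = ⌊m/(n−1)⌋ and α = m/(n−1) − s, and let v be a vertex of G of maximum degree Δ(G). Then the number of cycles of G that contain v is at most (Δ(G)/2)·(s^{1−α}(s+1)^{α})^{n−1}. -/
/-- A subgraph of a simple graph is a cycle subgraph if it is connected (hence nonempty)
and every one of its vertices has exactly two neighbours in it. -/
def SimpleGraph.Subgraph.IsCycleSub {V : Type*} {G : SimpleGraph V} (H : G.Subgraph) : Prop :=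
  H.coe.Connected ∧ ∀ v ∈ H.verts, (H.neighborSet v).ncard = 2

/-- `C(G)`: the number of cycles in a simple graph `G`, i.e. the number of distinct
subgraphs of `G` that are cycles. -/
noncomputable def SimpleGraph.cycleCount {V : Type*} (G : SimpleGraph V) : ℕ :=
  {H : G.Subgraph | H.IsCycleSub}.ncard

/-- `C(m)`: the maximum number of cycles in a simple graph with `m` edges. -/
noncomputable def maxCycles (m : ℕ) : ℕ :=
  sSup {c : ℕ | ∃ (n : ℕ) (G : SimpleGraph (Fin n)), G.edgeSet.ncard = m ∧ c = G.cycleCount}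

/-!
Orienting a cycle through `v` and deleting its first edge leaves a path from a neighbour of `v`
back to `v`, and every cycle through `v` arises in this way from two different paths. Paths from
`x` to `v` inside a vertex set `U` are counted by peeling off their first edge: if `x` has `d`
neighbours in `U`, then deleting `x` from `U` destroys `d` edges of `G[U]`. By induction this
bounds their number by `c ^ (|U| - 1) * q ^ e(U)` as soon as `c, q ≥ 1` and `d ≤ c * q ^ d` for
every `d`. The choice `q = 1 + 1/s`, `c = s / q ^ s` is admissible by Bernoulli's inequality
(`c ≥ 1` because `q ^ s ≤ e ≤ s`), and for `U = V` it turns `c ^ (n - 1) * q ^ m` into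
`(s ^ (1 - α) * (s + 1) ^ α) ^ (n - 1)`.
-/

open Finset

lemma one_add_inv_pow_le_self {s : ℕ} (hs : 3 ≤ s) : (1 + (s : ℝ)⁻¹) ^ s ≤ s :=
  Real.one_add_inv_pow_le_exp.trans <| Real.exp_one_lt_d9.le.trans <| by
    have : (3 : ℝ) ≤ s := by exact_mod_cast hs
    norm_num; linarith

lemma natCast_le_div_one_add_inv_pow_mul_pow {s : ℕ} (hs : 0 < s) (d : ℕ) :
    (d : ℝ) ≤ s / (1 + (s : ℝ)⁻¹) ^ s * (1 + (s : ℝ)⁻¹) ^ d := by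
  have hs' : (0 : ℝ) < s := Nat.cast_pos.mpr hs
  set q : ℝ := 1 + (s : ℝ)⁻¹
  rw [div_mul_eq_mul_div, le_div_iff₀ (by positivity)]
  rcases le_total s d with hsd | hds
  · obtain ⟨t, rfl⟩ := Nat.exists_eq_add_of_le hsd
    have bernoulli := one_add_mul_le_pow (a := (s : ℝ)⁻¹) (by linarith [inv_nonneg.2 hs'.le]) t
    calc ((s + t : ℕ) : ℝ) * q ^ s = s * (1 + t * (s : ℝ)⁻¹) * q ^ s := by
          field_simp; push_cast; ring
      _ ≤ s * q ^ t * q ^ s := by gcongr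
      _ = s * q ^ (s + t) := by ring
  · obtain ⟨t, ht⟩ := Nat.exists_eq_add_of_le hds
    -- Bernoulli's inequality for `q⁻¹ = 1 - (s + 1)⁻¹` bounds `q ^ t` from above.
    set r : ℝ := 1 + -((s : ℝ) + 1)⁻¹
    have hr : r * q = 1 := by simp only [r, q]; field_simp; ring
    have bernoulli := one_add_mul_le_pow (a := -((s : ℝ) + 1)⁻¹)
      (by have : ((s : ℝ) + 1)⁻¹ ≤ 1 := inv_le_one_of_one_le₀ (by linarith); linarith) t
    have hd : (d : ℝ) ≤ s * r ^ t := by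
      refine le_trans ?_ (mul_le_mul_of_nonneg_left bernoulli hs'.le)
      have hst : (s : ℝ) = d + t := by exact_mod_cast ht
      rw [hst]; field_simp; nlinarith
    calc (d : ℝ) * q ^ s = d * q ^ t * q ^ d := by rw [ht]; ring
      _ ≤ s * r ^ t * q ^ t * q ^ d := by gcongr
      _ = s * q ^ d := by rw [mul_assoc _ (r ^ t), ← mul_pow, hr, one_pow, mul_one]

lemma div_one_add_inv_pow_pow_mul_pow_eq {s N m : ℕ} (hs : 0 < s) (hN : 0 < N) {α : ℝ}
    (hα : α = (m : ℝ) / N - s) :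
    ((s : ℝ) / (1 + (s : ℝ)⁻¹) ^ s) ^ N * (1 + (s : ℝ)⁻¹) ^ m =
      ((s : ℝ) ^ (1 - α) * ((s : ℝ) + 1) ^ α) ^ N := by
  have hs' : (0 : ℝ) < s := Nat.cast_pos.mpr hs
  have hq : 0 < 1 + (s : ℝ)⁻¹ := by positivity
  have hbase : (s : ℝ) ^ (1 - α) * ((s : ℝ) + 1) ^ α = s * (1 + (s : ℝ)⁻¹) ^ α := by
    rw [show (s : ℝ) + 1 = s * (1 + (s : ℝ)⁻¹) by field_simp, Real.mul_rpow hs'.le hq.le,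
      ← mul_assoc, ← Real.rpow_add hs', sub_add_cancel, Real.rpow_one]
  have hexp : (m : ℝ) = α * N + s * N := by rw [hα]; field_simp; ring
  rw [hbase, mul_pow, div_pow, ← pow_mul, ← Real.rpow_mul_natCast hq.le,
    ← Real.rpow_natCast _ m, hexp, Real.rpow_add hq, ← Real.rpow_natCast _ (s * N)]
  push_cast
  field_simp

namespace SimpleGraph

variable {V : Type*} {G : SimpleGraph V}

lemma Subgraph.IsCycleSub.isCycles_spanningCoe {H : G.Subgraph} (hH : H.IsCycleSub) :
    H.spanningCoe.IsCycles := fun w ⟨_, hw⟩ => hH.2 w (H.edge_vert hw)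

lemma Subgraph.reachable_spanningCoe_iff {H : G.Subgraph} (hH : H.coe.Connected)
    {v w : V} (hv : v ∈ H.verts) : H.spanningCoe.Reachable w v ↔ w ∈ H.verts := by
  refine ⟨fun ⟨q⟩ => ?_, fun hw => ?_⟩
  · by_cases hq : q.Nil
    · exact hq.eq ▸ hv
    · exact H.edge_vert (q.adj_snd hq)
  · exact (hH ⟨w, hw⟩ ⟨v, hv⟩).map ⟨Subtype.val, id⟩

lemma Subgraph.IsCycleSub.exists_isCycle_toSubgraph_eq [Finite V] {H : G.Subgraph}
    (hH : H.IsCycleSub) {v : V} (hv : v ∈ H.verts) :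
    ∃ p : G.Walk v v, p.IsCycle ∧ p.toSubgraph = H := by
  have hnonempty : (H.spanningCoe.neighborSet v).Nonempty :=
    Set.nonempty_of_ncard_ne_zero (by
      rw [show H.spanningCoe.neighborSet v = H.neighborSet v from rfl, hH.2 v hv]; norm_num)
  obtain ⟨p, hp, hverts⟩ :=
    hH.isCycles_spanningCoe.exists_cycle_toSubgraph_verts_eq_connectedComponentSupp
      (c := H.spanningCoe.connectedComponentMk v) rfl hnonempty
  have hverts' : p.toSubgraph.verts = H.verts := by
    ext w
    rw [hverts, ConnectedComponent.mem_supp_iff, ConnectedComponent.eq,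
      H.reachable_spanningCoe_iff hH.1 hv]
  have := Fintype.ofFinite V
  classical
  refine ⟨p.mapLe H.spanningCoe_le, (Walk.isCycle_mapLe _).2 hp, ?_⟩
  ext a b
  · simp [← hverts']
  · rw [Walk.adj_toSubgraph_mapLe]
    by_cases ha : a ∈ H.verts
    · exact hp.adj_toSubgraph_iff_of_isCycles hH.isCycles_spanningCoe (hverts' ▸ ha) b
    · exact iff_of_false (fun h => ha (hverts' ▸ p.toSubgraph.edge_vert h))
        (fun h => ha (H.edge_vert h))

lemma Walk.IsCycle.reverse_ne {v : V} {p : G.Walk v v} (hp : p.IsCycle) : p.reverse ≠ p :=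
  fun h => hp.snd_ne_penultimate (by rw [← Walk.snd_reverse, h])

variable [Fintype V] [DecidableEq V] [DecidableRel G.Adj]

variable (G) in
def finsetPathWithin (U : Finset V) (x v : V) : Finset (G.Path x v) :=
  {p | ∀ w ∈ (p : G.Walk x v).support, w ∈ U}

lemma card_edgeFinset_inter_sym2_erase_add_le {U : Finset V} {x : V} (hx : x ∈ U) :
    #(G.edgeFinset ∩ (U.erase x).sym2) + #{z ∈ U | G.Adj x z} ≤
      #(G.edgeFinset ∩ U.sym2) := by
  have hinj : Set.InjOn (fun z => s(x, z)) ({z ∈ U | G.Adj x z} : Finset V) := by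
    intro a _ b _ hab
    exact Sym2.congr_right.mp hab
  rw [← card_image_of_injOn hinj, ← card_union_of_disjoint]
  · apply card_le_card
    intro e he
    simp only [mem_union, mem_inter, mem_image, mem_filter, mem_sym2_iff, mem_edgeFinset] at he ⊢
    rcases he with ⟨he, hU⟩ | ⟨z, ⟨hz, hxz⟩, rfl⟩
    · exact ⟨he, fun w hw => mem_of_mem_erase (hU w hw)⟩
    · refine ⟨hxz, fun w hw => ?_⟩
      rcases Sym2.mem_iff.mp hw with rfl | rfl <;> assumption
  · rw [Finset.disjoint_left]
    intro e he he'
    obtain ⟨z, -, rfl⟩ := mem_image.mp he'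
    simp only [mem_inter, mem_sym2_iff] at he
    exact notMem_erase x U (he.2 x (Sym2.mem_mk_left x z))

lemma card_finsetPathWithin_le_sum {U : Finset V} {x v : V} (hxv : x ≠ v) :
    #(G.finsetPathWithin U x v) ≤
      ∑ z ∈ U with G.Adj x z, #(G.finsetPathWithin (U.erase x) z v) := by
  have hsupp : Set.InjOn (fun p : G.Path x v => (p : G.Walk x v).support)
      (G.finsetPathWithin U x v) :=
    fun p _ p' _ h => Subtype.ext (Walk.support_injective h)
  rw [← card_image_of_injOn hsupp]
  refine (card_le_card (t := ({z ∈ U | G.Adj x z} : Finset V).biUnion fun z =>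
      (G.finsetPathWithin (U.erase x) z v).image fun q : G.Path z v =>
        x :: (q : G.Walk z v).support)
      ?_).trans (card_biUnion_le.trans (sum_le_sum fun z _ => card_image_le))
  intro l hl
  obtain ⟨⟨p, hp⟩, hpU, rfl⟩ := mem_image.mp hl
  simp only [finsetPathWithin, mem_filter, mem_univ, true_and] at hpU
  cases p with
  | nil => exact absurd rfl hxv
  | cons h q =>
    rw [Walk.cons_isPath_iff] at hp
    simp only [Walk.support_cons, List.mem_cons, forall_eq_or_imp] at hpU
    simp only [mem_biUnion, mem_filter, mem_image, finsetPathWithin, mem_univ, true_and]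
    refine ⟨_, ⟨hpU.2 _ q.start_mem_support, h⟩, ⟨q, hp.1⟩, fun w hw => ?_, rfl⟩
    exact mem_erase.mpr ⟨fun hwx => hp.2 (hwx ▸ hw), hpU.2 w hw⟩

lemma card_finsetPathWithin_le {c q : ℝ} (hc : 1 ≤ c) (hq : 1 ≤ q)
    (hcq : ∀ d : ℕ, (d : ℝ) ≤ c * q ^ d) (U : Finset V) {x v : V} (hx : x ∈ U)
    (hv : v ∈ U) :
    (#(G.finsetPathWithin U x v) : ℝ) ≤ c ^ (#U - 1) * q ^ #(G.edgeFinset ∩ U.sym2) := by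
  induction U using Finset.strongInduction generalizing x with
  | H U ih =>
  by_cases hxv : x = v
  · subst hxv
    have hloop : G.finsetPathWithin U x x ⊆ {Path.nil} := fun p _ => mem_singleton.mpr p.loop_eq
    calc (#(G.finsetPathWithin U x x) : ℝ) ≤ 1 := by
          exact_mod_cast (card_le_card hloop).trans (card_singleton _).le
      _ ≤ c ^ (#U - 1) * q ^ #(G.edgeFinset ∩ U.sym2) :=
          one_le_mul_of_one_le_of_one_le (one_le_pow₀ hc) (one_le_pow₀ hq)
  set d := #{z ∈ U | G.Adj x z}
  set k := #(U.erase x) - 1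
  have hk : #U - 1 = k + 1 := by
    have := card_erase_add_one hx
    have := card_pos.mpr ⟨v, mem_erase.mpr ⟨Ne.symm hxv, hv⟩⟩
    omega
  have hbudget := card_edgeFinset_inter_sym2_erase_add_le (G := G) hx
  set Q' := #(G.edgeFinset ∩ (U.erase x).sym2)
  calc (#(G.finsetPathWithin U x v) : ℝ)
      ≤ ∑ z ∈ U with G.Adj x z, (#(G.finsetPathWithin (U.erase x) z v) : ℝ) := by
        exact_mod_cast card_finsetPathWithin_le_sum hxv
    _ ≤ ∑ z ∈ U with G.Adj x z, c ^ k * q ^ Q' := by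
        refine sum_le_sum fun z hz =>
          ih _ (erase_ssubset hx) ?_ (mem_erase.mpr ⟨Ne.symm hxv, hv⟩)
        obtain ⟨hzU, hxz⟩ := mem_filter.mp hz
        exact mem_erase.mpr ⟨hxz.ne.symm, hzU⟩
    _ = d * (c ^ k * q ^ Q') := by rw [sum_const, nsmul_eq_mul]
    _ ≤ c * q ^ d * (c ^ k * q ^ Q') := by gcongr; exact hcq d
    _ = c ^ (k + 1) * q ^ (Q' + d) := by ring
    _ ≤ c ^ (#U - 1) * q ^ #(G.edgeFinset ∩ U.sym2) := by
        rw [hk]; exact mul_le_mul_of_nonneg_left (pow_le_pow_right₀ hq hbudget) (by positivity)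

variable (G) in
def neighborPathSupports (v : V) : Finset (List V) :=
  (G.neighborFinset v).biUnion fun u => univ.image fun q : G.Path u v => (q : G.Walk u v).support

lemma card_neighborPathSupports_le (v : V) :
    #(G.neighborPathSupports v) ≤ ∑ u ∈ G.neighborFinset v, Fintype.card (G.Path u v) :=
  card_biUnion_le.trans (sum_le_sum fun _ _ => card_image_le)

lemma Walk.IsCycle.support_tail_mem_neighborPathSupports {v : V} {p : G.Walk v v}
    (hp : p.IsCycle) : p.support.tail ∈ G.neighborPathSupports v := by
  cases p with
  | nil => exact absurd rfl hp.ne_nil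
  | cons h q =>
    simp only [neighborPathSupports, mem_biUnion, mem_neighborFinset, mem_image, mem_univ,
      true_and, Walk.support_cons, List.tail_cons]
    exact ⟨_, h, ⟨q, ((Walk.cons_isCycle_iff q h).mp hp).1⟩, rfl⟩

lemma two_mul_ncard_cycles_through_le (v : V) :
    2 * {H : G.Subgraph | H.IsCycleSub ∧ v ∈ H.verts}.ncard ≤
      #(G.neighborPathSupports v) := by
  choose! p hp hpH using fun H (hH : H ∈ {H : G.Subgraph | H.IsCycleSub ∧ v ∈ H.verts}) =>
    Subgraph.IsCycleSub.exists_isCycle_toSubgraph_eq hH.1 hH.2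
  let orient : G.Subgraph × Bool → G.Walk v v :=
    fun Hb => bif Hb.2 then p Hb.1 else (p Hb.1).reverse
  have horient :
      ∀ Hb ∈ {H : G.Subgraph | H.IsCycleSub ∧ v ∈ H.verts} ×ˢ (Set.univ : Set Bool),
      (orient Hb).IsCycle ∧ (orient Hb).toSubgraph = Hb.1 := by
    rintro ⟨H, _ | _⟩ ⟨hH, -⟩
    · exact ⟨(hp H hH).reverse, (Walk.toSubgraph_reverse _).trans (hpH H hH)⟩
    · exact ⟨hp H hH, hpH H hH⟩
  have hinj : Set.InjOn (fun Hb => (orient Hb).support.tail)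
      ({H : G.Subgraph | H.IsCycleSub ∧ v ∈ H.verts} ×ˢ (Set.univ : Set Bool)) := by
    intro Hb hHb Hb' hHb' h
    have hwalk : orient Hb = orient Hb' :=
      Walk.support_injective <| by
        rw [← Walk.cons_tail_support, ← Walk.cons_tail_support (orient Hb')]; exact congrArg _ h
    have hH : Hb.1 = Hb'.1 := by rw [← (horient Hb hHb).2, ← (horient Hb' hHb').2, hwalk]
    obtain ⟨H, b⟩ := Hb
    obtain ⟨H', b'⟩ := Hb'
    subst hH
    have hcyc := hp H hHb.1
    cases b <;> cases b'
    all_goals first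
      | rfl
      | exact absurd hwalk hcyc.reverse_ne
      | exact absurd hwalk.symm hcyc.reverse_ne
  calc 2 * {H : G.Subgraph | H.IsCycleSub ∧ v ∈ H.verts}.ncard
      = ({H : G.Subgraph | H.IsCycleSub ∧ v ∈ H.verts} ×ˢ (Set.univ : Set Bool)).ncard := by
        rw [Set.ncard_prod, Set.ncard_univ, Nat.card_eq_fintype_card, Fintype.card_bool, mul_comm]
    _ ≤ (G.neighborPathSupports v : Set (List V)).ncard :=
        Set.ncard_le_ncard_of_injOn _
          (fun Hb hHb => (horient Hb hHb).1.support_tail_mem_neighborPathSupports) hinj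
          (finite_toSet _)
    _ = #(G.neighborPathSupports v) := Set.ncard_coe_finset _

end SimpleGraph

theorem cycles_through_max_degree_vertex_dense_general {V : Type*} [Fintype V] (G : SimpleGraph V)
    [DecidableRel G.Adj] (n m : ℕ) (hcard : Fintype.card V = n)
    (hm : G.edgeSet.ncard = m) (hge : 3 ≤ (m : ℝ) / ((n : ℝ) - 1))
    (s : ℕ) (hs : s = ⌊(m : ℝ) / ((n : ℝ) - 1)⌋₊)
    (α : ℝ) (hα : α = (m : ℝ) / ((n : ℝ) - 1) - s)
    (v : V) :
    ({H : G.Subgraph | H.IsCycleSub ∧ v ∈ H.verts}.ncard : ℝ) ≤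
      (G.maxDegree : ℝ) / 2 * ((s : ℝ) ^ (1 - α) * ((s : ℝ) + 1) ^ α) ^ (n - 1) := by
  classical
  have hn : 1 < n := by
    by_contra! hn
    have : (n : ℝ) - 1 ≤ 0 := by linarith [show (n : ℝ) ≤ 1 by exact_mod_cast hn]
    linarith [div_nonpos_of_nonneg_of_nonpos (Nat.cast_nonneg (α := ℝ) m) this]
  have hs3 : 3 ≤ s := hs ▸ Nat.le_floor (by exact_mod_cast hge)
  have hE : #G.edgeFinset = m := by rw [← hm, Set.ncard_eq_toFinset_card']; rfl
  set q : ℝ := 1 + (s : ℝ)⁻¹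
  have hpath (u : V) : (Fintype.card (G.Path u v) : ℝ) ≤ (s / q ^ s) ^ (n - 1) * q ^ m := by
    have := SimpleGraph.card_finsetPathWithin_le (G := G)
      ((one_le_div (by positivity)).mpr (one_add_inv_pow_le_self hs3))
      (le_add_of_nonneg_right (by positivity))
      (natCast_le_div_one_add_inv_pow_mul_pow (by omega)) univ (mem_univ u) (mem_univ v)
    simpa [SimpleGraph.finsetPathWithin, hcard, hE] using this
  have hcycles : (2 : ℝ) * {H : G.Subgraph | H.IsCycleSub ∧ v ∈ H.verts}.ncard ≤
      ∑ u ∈ G.neighborFinset v, (Fintype.card (G.Path u v) : ℝ) := by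
    exact_mod_cast (SimpleGraph.two_mul_ncard_cycles_through_le v).trans
      (SimpleGraph.card_neighborPathSupports_le v)
  calc ({H : G.Subgraph | H.IsCycleSub ∧ v ∈ H.verts}.ncard : ℝ)
      ≤ (∑ u ∈ G.neighborFinset v, (s / q ^ s) ^ (n - 1) * q ^ m) / 2 := by
        linarith [sum_le_sum fun u (_ : u ∈ G.neighborFinset v) => hpath u]
    _ = G.degree v / 2 * ((s / q ^ s) ^ (n - 1) * q ^ m) := by
        rw [sum_const, G.card_neighborFinset_eq_degree, nsmul_eq_mul]; ring
    _ ≤ G.maxDegree / 2 * ((s / q ^ s) ^ (n - 1) * q ^ m) := by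
        gcongr; exact_mod_cast G.degree_le_maxDegree v
    _ = G.maxDegree / 2 * ((s : ℝ) ^ (1 - α) * ((s : ℝ) + 1) ^ α) ^ (n - 1) := by
        rw [div_one_add_inv_pow_pow_mul_pow_eq (α := α) (by omega) (by omega)
          (by rw [hα, Nat.cast_pred (by omega)])]

/-- If `G` has `n ≥ 3` vertices, `m` edges, `m/(n-1) ≥ 3`, `s = ⌊m/(n-1)⌋`,
`α = m/(n-1) - s`, and `v` is a vertex of maximum degree, then the number of cycles
of `G` containing `v` is at most `(Δ(G)/2) (s^(1-α) (s+1)^α)^(n-1)`. -/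
theorem cycles_through_max_degree_vertex_dense {V : Type*} [Fintype V] (G : SimpleGraph V)
    [DecidableRel G.Adj] (n m : ℕ) (hn : 3 ≤ n) (hcard : Fintype.card V = n)
    (hm : G.edgeSet.ncard = m) (hge : 3 ≤ (m : ℝ) / ((n : ℝ) - 1))
    (s : ℕ) (hs : s = ⌊(m : ℝ) / ((n : ℝ) - 1)⌋₊)
    (α : ℝ) (hα : α = (m : ℝ) / ((n : ℝ) - 1) - s)
    (v : V) (hv : G.degree v = G.maxDegree) :
    ({H : G.Subgraph | H.IsCycleSub ∧ v ∈ H.verts}.ncard : ℝ) ≤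
      (G.maxDegree : ℝ) / 2 * ((s : ℝ) ^ (1 - α) * ((s : ℝ) + 1) ^ α) ^ (n - 1) :=
  cycles_through_max_degree_vertex_dense_general G n m hcard hm hge s hs α hα v
end

section
/- Let G be a simple graph with n ≥ 2 vertices, let k ∈ {1,…,n−1}, and let v₁, v₂, …, v_k be a path in G such that F(v₁,…,v_k) = N(v_k) \ {v₁,…,v_{k−1}} is nonempty. Then the number of cycles of G containing the path v₁⋯v_k is at most f(v₁,…,v_k) times the maximum, over all t with k+1 ≤ t ≤ n and all choices of vertices v_{k+1} ∈ F(v₁,…,v_k), v_{k+2} ∈ F(v₁,…,v_{k+1}), …, v_t ∈ F(v₁,…,v_{t−1}), of the product f(v₁,…,v_{k+1})·f(v₁,…,v_{k+2})⋯f(v₁,…,v_t). -/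
/-!
Induction on `n - k`, extending the path by one vertex at a time. In a cycle `H` through
`v₁⋯v_k`, the vertex `v_k` has a second `H`-neighbour `u` besides `v_{k-1}`. It is not an
interior vertex `v_i` (`2 ≤ i ≤ k - 1`), which already has its two `H`-neighbours `v_{i±1}`,
so `u` takes at most `f(v₁,…,v_k)` values. If `u = v₁`, then `H` closes up along the path and
is determined by it. Otherwise `u ∈ F(v₁,…,v_k)` and `H` passes through the longer path
`v₁⋯v_k u`; by induction there are at most `f(v₁,…,v_k,u) ⋅ P` such cycles, where `P` is the
bound for `v₁⋯v_k u`, and every such product is one of the products in the supremum for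
`v₁⋯v_k`.
-/

open Function

lemma Set.ncard_le_mul_ncard_of_mapsTo {α β : Type*} {s : Set α} {t : Set β} {f : α → β}
    (hs : s.Finite) (ht : t.Finite) (hf : Set.MapsTo f s t) (n : ℕ)
    (hn : ∀ b ∈ t, {a ∈ s | f a = b}.ncard ≤ n) : s.ncard ≤ n * t.ncard := by
  classical
  obtain ⟨s, rfl⟩ := hs.exists_finset_coe
  obtain ⟨t, rfl⟩ := ht.exists_finset_coe
  simp only [Set.ncard_coe_finset]
  refine Finset.card_le_mul_card_image_of_maps_to hf n fun b hb => ?_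
  rw [← Set.ncard_coe_finset, Finset.coe_filter]
  exact hn b hb

namespace SimpleGraph

variable {V : Type*} {G : SimpleGraph V}

namespace Subgraph

lemma verts_subset_of_neighborSet_subset {H : G.Subgraph} (hH : H.coe.Preconnected)
    {S : Set V} {x : V} (hxS : x ∈ S) (hxH : x ∈ H.verts)
    (hS : ∀ y ∈ S, H.neighborSet y ⊆ S) : H.verts ⊆ S := by
  intro y hy
  by_contra hyS
  obtain ⟨p⟩ := hH ⟨x, hxH⟩ ⟨y, hy⟩
  obtain ⟨d, -, hd, hd'⟩ := p.exists_boundary_dart (Subtype.val ⁻¹' S) hxS hyS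
  exact hd' (hS _ hd d.adj)

lemma ext_of_neighborSet_eq {H H' : G.Subgraph} (hH : H.coe.Preconnected)
    (hH' : H'.coe.Preconnected) {S : Set V} {x : V} (hx : x ∈ S) (hSH : S ⊆ H.verts)
    (hSH' : S ⊆ H'.verts)
    (hN : ∀ y ∈ S, H.neighborSet y = H'.neighborSet y ∧ H.neighborSet y ⊆ S) : H = H' := by
  have hV : H.verts = S :=
    (verts_subset_of_neighborSet_subset hH hx (hSH hx) fun y hy => (hN y hy).2).antisymm hSH
  have hV' : H'.verts = S := by
    refine (verts_subset_of_neighborSet_subset hH' hx (hSH' hx) fun y hy => ?_).antisymm hSH'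
    exact (hN y hy).1 ▸ (hN y hy).2
  refine Subgraph.ext (hV.trans hV'.symm)
    (funext₂ fun a b => propext ⟨fun h => ?_, fun h => ?_⟩)
  · have hN' := (hN a (hV ▸ h.fst_mem)).1
    exact (hN' ▸ h : b ∈ H'.neighborSet a)
  · have hN' := (hN a (hV' ▸ h.fst_mem)).1
    exact (hN'.symm ▸ h : b ∈ H.neighborSet a)

variable {H : G.Subgraph}

lemma IsCycleSub.exists_adj_ne (hH : H.IsCycleSub) {x : V} (hx : x ∈ H.verts) (y : V) :
    ∃ u, H.Adj x u ∧ u ≠ y := by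
  obtain ⟨a, b, hab, hN⟩ := Set.ncard_eq_two.mp (hH.2 x hx)
  have ha : a ∈ H.neighborSet x := by rw [hN]; exact Set.mem_insert a _
  have hb : b ∈ H.neighborSet x := by rw [hN]; exact Set.mem_insert_of_mem a rfl
  by_cases hay : a = y
  · exact ⟨b, hb, fun hby => hab (hay.trans hby.symm)⟩
  · exact ⟨a, ha, hay⟩

lemma IsCycleSub.neighborSet_eq_pair (hH : H.IsCycleSub) {x a b : V} (ha : H.Adj x a)
    (hb : H.Adj x b) (hab : a ≠ b) : H.neighborSet x = {a, b} := by
  have h2 : (H.neighborSet x).ncard = 2 := hH.2 x ha.fst_mem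
  refine (Set.eq_of_subset_of_ncard_le (Set.pair_subset (s := H.neighborSet x) ha hb) ?_
    (Set.finite_of_ncard_ne_zero (by omega))).symm
  rw [h2, Set.ncard_pair hab]

lemma IsCycleSub.eq_or_eq_of_adj (hH : H.IsCycleSub) {x a b c : V} (ha : H.Adj x a)
    (hb : H.Adj x b) (hab : a ≠ b) (hc : H.Adj x c) : c = a ∨ c = b := by
  have hc' : c ∈ H.neighborSet x := hc
  rwa [hH.neighborSet_eq_pair ha hb hab] at hc'

end Subgraph

variable (G)

def cyclesThrough (v : ℕ → V) (k : ℕ) : Set G.Subgraph :=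
  {H | H.IsCycleSub ∧ (∀ i, 1 ≤ i → i ≤ k → v i ∈ H.verts) ∧
    ∀ i, 1 ≤ i → i < k → H.Adj (v i) (v (i + 1))}

/-- `pathNext G v k` and `pathDeg G v k` are the paper's `F(v₁,…,v_k)` and `f(v₁,…,v_k)`. -/
def pathNext (v : ℕ → V) (k : ℕ) : Set V :=
  G.neighborSet (v k) \ v '' Set.Icc 1 (k - 1)

noncomputable def pathDeg (v : ℕ → V) (k : ℕ) : ℕ :=
  max (G.neighborSet (v k) \ v '' Set.Icc 2 (k - 1)).ncard 1

def extensionProducts (n : ℕ) (v : ℕ → V) (k : ℕ) : Set ℕ :=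
  {P | ∃ t, k + 1 ≤ t ∧ t ≤ n ∧ ∃ w : ℕ → V, (∀ i, i ≤ k → w i = v i) ∧
    (∀ j, k + 1 ≤ j → j ≤ t → w j ∈ G.pathNext w (j - 1)) ∧
    P = ∏ j ∈ Finset.Icc (k + 1) t, G.pathDeg w j}

/-- `insert 1` makes the bound `1` when the path has no admissible extension (`sSup ∅ = 0`). -/
noncomputable def extensionBound (n : ℕ) (v : ℕ → V) (k : ℕ) : ℕ :=
  sSup (insert 1 (G.extensionProducts n v k))

variable {G} {v : ℕ → V} {k : ℕ}

lemma le_card_of_injOn [Finite V] (hinj : Set.InjOn v (Set.Icc 1 k)) : k ≤ Nat.card V := by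
  have h := Set.ncard_le_card (v '' Set.Icc 1 k)
  rwa [hinj.ncard_image, Set.ncard_Icc_nat, Nat.add_sub_cancel] at h

lemma notMem_image_of_mem_pathNext {u : V} (hu : u ∈ G.pathNext v k) :
    u ∉ v '' Set.Icc 1 k := by
  rintro ⟨i, hi, rfl⟩
  rcases hi.2.eq_or_lt with rfl | hik
  · exact hu.1.ne rfl
  · exact hu.2 ⟨i, ⟨hi.1, by omega⟩, rfl⟩

lemma injOn_update_of_mem_pathNext (hinj : Set.InjOn v (Set.Icc 1 k)) {u : V}
    (hu : u ∈ G.pathNext v k) : Set.InjOn (update v (k + 1) u) (Set.Icc 1 (k + 1)) := by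
  have heq : Set.EqOn v (update v (k + 1) u) (Set.Icc 1 k) := fun i hi =>
    (update_of_ne (by have := hi.2; omega) _ _).symm
  rw [← Set.insert_Icc_right_eq_Icc_add_one (by omega),
    Set.injOn_insert (fun h => by have := h.2; omega), update_self, ← heq.image_eq]
  exact ⟨hinj.congr heq, notMem_image_of_mem_pathNext hu⟩

lemma pathNext_congr {w w' : ℕ → V} (h : ∀ i ≤ k, w i = w' i) :
    G.pathNext w k = G.pathNext w' k := by
  rw [pathNext, pathNext, h k le_rfl, Set.image_congr fun i hi => h i (by have := hi.2; omega)]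

lemma pathDeg_congr {w w' : ℕ → V} (h : ∀ i ≤ k, w i = w' i) :
    G.pathDeg w k = G.pathDeg w' k := by
  rw [pathDeg, pathDeg, h k le_rfl, Set.image_congr fun i hi => h i (by have := hi.2; omega)]

lemma pathDeg_le_card_add_one [Finite V] (w : ℕ → V) (j : ℕ) :
    G.pathDeg w j ≤ Nat.card V + 1 :=
  max_le ((Set.ncard_le_card _).trans (Nat.le_succ _)) (Nat.le_add_left 1 _)

lemma bddAbove_extensionProducts [Finite V] (n : ℕ) (v : ℕ → V) (k : ℕ) :
    BddAbove (G.extensionProducts n v k) := by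
  refine ⟨(Nat.card V + 1) ^ n, ?_⟩
  rintro _ ⟨t, -, htn, w, -, -, rfl⟩
  calc ∏ j ∈ Finset.Icc (k + 1) t, G.pathDeg w j
      ≤ (Nat.card V + 1) ^ (Finset.Icc (k + 1) t).card :=
        Finset.prod_le_pow_card _ _ _ fun j _ => pathDeg_le_card_add_one w j
    _ ≤ (Nat.card V + 1) ^ n := Nat.pow_le_pow_right (Nat.succ_pos _) (by simp; omega)

lemma pathDeg_mul_mem_extensionProducts {n : ℕ} {u : V} (hu : u ∈ G.pathNext v k)
    (hkn : k + 1 ≤ n) {P : ℕ}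
    (hP : P ∈ insert 1 (G.extensionProducts n (update v (k + 1) u) (k + 1))) :
    G.pathDeg (update v (k + 1) u) (k + 1) * P ∈ G.extensionProducts n v k := by
  have hv : ∀ i ≤ k, update v (k + 1) u i = v i := fun i hi => update_of_ne (by omega) _ _
  have hnext : ∀ w : ℕ → V, (∀ i ≤ k + 1, w i = update v (k + 1) u i) →
      w (k + 1) ∈ G.pathNext w k := by
    intro w hw
    rw [hw _ le_rfl, update_self,
      pathNext_congr fun i hi => (hw i (by omega)).trans (hv i hi)]
    exact hu
  rcases hP with rfl | ⟨t, ht, htn, w, hw, hwnext, rfl⟩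
  · refine ⟨k + 1, le_rfl, hkn, update v (k + 1) u, hv, fun j hj hj' => ?_, by simp⟩
    obtain rfl : j = k + 1 := by omega
    exact hnext _ fun _ _ => rfl
  · refine ⟨t, by omega, htn, w, fun i hi => (hw i (by omega)).trans (hv i hi),
      fun j hj hj' => ?_, ?_⟩
    · rcases hj.eq_or_lt with rfl | hj
      · exact hnext w hw
      · exact hwnext j hj hj'
    · rw [← pathDeg_congr hw, Finset.Icc_add_one_left_eq_Ioc (k + 1) t,
        Finset.mul_prod_Ioc_eq_prod_Icc (by omega)]

lemma one_le_extensionBound [Finite V] (n : ℕ) (v : ℕ → V) (k : ℕ) :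
    1 ≤ G.extensionBound n v k :=
  le_csSup ((bddAbove_extensionProducts n v k).insert 1) (Set.mem_insert 1 _)

lemma pathDeg_mul_extensionBound_le [Finite V] {n : ℕ} {u : V} (hu : u ∈ G.pathNext v k)
    (hkn : k + 1 ≤ n) :
    G.pathDeg (update v (k + 1) u) (k + 1) * G.extensionBound n (update v (k + 1) u) (k + 1) ≤
      G.extensionBound n v k := by
  refine le_csSup ((bddAbove_extensionProducts n v k).insert 1) (Set.mem_insert_of_mem 1 ?_)
  exact pathDeg_mul_mem_extensionProducts hu hkn
    (Nat.sSup_mem (Set.insert_nonempty _ _) ((bddAbove_extensionProducts n _ (k + 1)).insert 1))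

lemma extensionBound_eq_sSup [Finite V] {n : ℕ} {u : V} (hu : u ∈ G.pathNext v k)
    (hkn : k + 1 ≤ n) : G.extensionBound n v k = sSup (G.extensionProducts n v k) := by
  have hmem := pathDeg_mul_mem_extensionProducts hu hkn (Set.mem_insert 1 _)
  have hbdd := bddAbove_extensionProducts (G := G) n v k
  rw [extensionBound, csSup_insert hbdd ⟨_, hmem⟩, sup_eq_right]
  exact (Nat.le_mul_of_pos_left 1 (Nat.one_le_iff_ne_zero.mpr (by simp [pathDeg]))).trans
    (le_csSup hbdd hmem)

lemma mem_cyclesThrough_update {H : G.Subgraph} (hH : H ∈ G.cyclesThrough v k) {u : V}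
    (hu : H.Adj (v k) u) : H ∈ G.cyclesThrough (update v (k + 1) u) (k + 1) := by
  refine ⟨hH.1, fun i hi hik => ?_, fun i hi hik => ?_⟩
  · rcases hik.eq_or_lt with rfl | hik
    · rw [update_self]
      exact hu.snd_mem
    · rw [update_of_ne (by omega)]
      exact hH.2.1 i hi (by omega)
  · rw [update_of_ne (by omega)]
    rcases (Nat.lt_succ_iff.mp hik).eq_or_lt with rfl | hik
    · rw [update_self]
      exact hu
    · rw [update_of_ne (by omega)]
      exact hH.2.2 i hi hik

lemma adj_pred_of_mem_cyclesThrough {H : G.Subgraph} (hH : H ∈ G.cyclesThrough v k) {i : ℕ}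
    (hi : 2 ≤ i) (hik : i ≤ k) : H.Adj (v i) (v (i - 1)) := by
  have h := hH.2.2 (i - 1) (by omega) (by omega)
  rw [Nat.sub_add_cancel (by omega)] at h
  exact h.symm

lemma notMem_interior_of_adj (hinj : Set.InjOn v (Set.Icc 1 k)) {H : G.Subgraph}
    (hH : H ∈ G.cyclesThrough v k) {u : V} (hu : H.Adj (v k) u) (hne : u ≠ v (k - 1)) :
    u ∉ v '' Set.Icc 2 (k - 1) := by
  rintro ⟨i, ⟨hi, hik⟩, rfl⟩
  rcases hik.eq_or_lt with rfl | hik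
  · exact hne rfl
  have hpred := adj_pred_of_mem_cyclesThrough hH hi (by omega)
  have hsucc := hH.2.2 i (by omega) (by omega)
  have hne' := hinj.ne ⟨by omega, by omega⟩ ⟨by omega, by omega⟩ (by omega : i - 1 ≠ i + 1)
  rcases hH.1.eq_or_eq_of_adj hpred hsucc hne' hu.symm with h | h <;>
    exact absurd (hinj ⟨by omega, le_rfl⟩ ⟨by omega, by omega⟩ h) (by omega)

lemma exists_cycle_neighbors (hk : 3 ≤ k) {i : ℕ} (hi : i ∈ Set.Icc 1 k) :
    ∃ a ∈ Set.Icc 1 k, ∃ b ∈ Set.Icc 1 k, a ≠ b ∧ ∀ H ∈ G.cyclesThrough v k,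
      H.Adj (v k) (v 1) → H.Adj (v i) (v a) ∧ H.Adj (v i) (v b) := by
  obtain ⟨hi1, hik⟩ := hi
  rcases hi1.eq_or_lt with rfl | hi1
  · exact ⟨k, ⟨by omega, le_rfl⟩, 2, ⟨by omega, by omega⟩, by omega,
      fun H hH hcl => ⟨hcl.symm, hH.2.2 1 le_rfl (by omega)⟩⟩
  rcases hik.eq_or_lt with hik | hik
  · subst hik
    exact ⟨i - 1, ⟨by omega, by omega⟩, 1, ⟨le_rfl, by omega⟩, by omega,
      fun H hH hcl => ⟨adj_pred_of_mem_cyclesThrough hH hi1 le_rfl, hcl⟩⟩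
  · exact ⟨i - 1, ⟨by omega, by omega⟩, i + 1, ⟨by omega, by omega⟩, by omega,
      fun H hH _ => ⟨adj_pred_of_mem_cyclesThrough hH hi1 hik.le, hH.2.2 i (by omega) hik⟩⟩

lemma eq_of_mem_cyclesThrough_of_adj (hinj : Set.InjOn v (Set.Icc 1 k)) (hk : 3 ≤ k)
    {H H' : G.Subgraph} (hH : H ∈ G.cyclesThrough v k) (hH' : H' ∈ G.cyclesThrough v k)
    (hcl : H.Adj (v k) (v 1)) (hcl' : H'.Adj (v k) (v 1)) : H = H' := by
  have hverts : ∀ H ∈ G.cyclesThrough v k, v '' Set.Icc 1 k ⊆ H.verts := by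
    rintro H hH _ ⟨i, hi, rfl⟩
    exact hH.2.1 i hi.1 hi.2
  refine Subgraph.ext_of_neighborSet_eq hH.1.1.preconnected hH'.1.1.preconnected
    (S := v '' Set.Icc 1 k) ⟨1, ⟨le_rfl, by omega⟩, rfl⟩ (hverts H hH) (hverts H' hH') ?_
  rintro _ ⟨i, hi, rfl⟩
  obtain ⟨a, ha, b, hb, hab, hadj⟩ := exists_cycle_neighbors (G := G) (v := v) hk hi
  have hab' := hinj.ne ha hb hab
  rw [hH.1.neighborSet_eq_pair (hadj H hH hcl).1 (hadj H hH hcl).2 hab',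
    hH'.1.neighborSet_eq_pair (hadj H' hH' hcl').1 (hadj H' hH' hcl').2 hab']
  exact ⟨rfl, Set.pair_subset ⟨a, ha, rfl⟩ ⟨b, hb, rfl⟩⟩

lemma ncard_cyclesThrough_le_of_forall_pathNext [Finite V] (hk : 1 ≤ k)
    (hinj : Set.InjOn v (Set.Icc 1 k))
    (ih : ∀ u ∈ G.pathNext v k, (G.cyclesThrough (update v (k + 1) u) (k + 1)).ncard ≤
      G.pathDeg (update v (k + 1) u) (k + 1) *
        G.extensionBound (Nat.card V) (update v (k + 1) u) (k + 1)) :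
    (G.cyclesThrough v k).ncard ≤ G.pathDeg v k * G.extensionBound (Nat.card V) v k := by
  set β := G.extensionBound (Nat.card V) v k
  have hexit : ∀ H ∈ G.cyclesThrough v k, ∃ u, H.Adj (v k) u ∧ u ≠ v (k - 1) :=
    fun H hH => hH.1.exists_adj_ne (hH.2.1 k hk le_rfl) _
  have : Nonempty V := ⟨v k⟩
  choose! exit hexit using hexit
  have hmaps :
      Set.MapsTo exit (G.cyclesThrough v k) (G.neighborSet (v k) \ v '' Set.Icc 2 (k - 1)) :=
    fun H hH => ⟨(hexit H hH).1.adj_sub,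
      notMem_interior_of_adj hinj hH (hexit H hH).1 (hexit H hH).2⟩
  have hfiber : ∀ u ∈ G.neighborSet (v k) \ v '' Set.Icc 2 (k - 1),
      {H ∈ G.cyclesThrough v k | exit H = u}.ncard ≤ β := by
    rintro u ⟨hadj, hint⟩
    by_cases hclose : u ∈ v '' Set.Icc 1 (k - 1)
    · obtain ⟨i, ⟨hi, hik⟩, rfl⟩ := hclose
      obtain rfl : i = 1 := by
        by_contra h
        exact hint ⟨i, ⟨by omega, hik⟩, rfl⟩
      refine (Set.ncard_le_one_iff_subsingleton.mpr ?_).trans (one_le_extensionBound _ _ _)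
      rintro H ⟨hH, hHu⟩ H' ⟨hH', hH'u⟩
      obtain ⟨hcl, hne⟩ := hexit H hH
      rw [hHu] at hcl hne
      have hk3 : 3 ≤ k := by
        have : k ≠ 1 := by
          rintro rfl
          exact (H.adj_sub hcl).ne rfl
        have : k - 1 ≠ 1 := fun h => hne (by rw [h])
        omega
      exact eq_of_mem_cyclesThrough_of_adj hinj hk3 hH hH' hcl (hH'u ▸ (hexit H' hH').1)
    · have hu : u ∈ G.pathNext v k := ⟨hadj, hclose⟩
      calc {H ∈ G.cyclesThrough v k | exit H = u}.ncard
          ≤ (G.cyclesThrough (update v (k + 1) u) (k + 1)).ncard :=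
            Set.ncard_le_ncard fun H ⟨hH, hHu⟩ =>
              mem_cyclesThrough_update hH (hHu ▸ (hexit H hH).1)
        _ ≤ _ := ih u hu
        _ ≤ β := pathDeg_mul_extensionBound_le hu
            (le_card_of_injOn (injOn_update_of_mem_pathNext hinj hu))
  calc (G.cyclesThrough v k).ncard
      ≤ β * (G.neighborSet (v k) \ v '' Set.Icc 2 (k - 1)).ncard :=
        Set.ncard_le_mul_ncard_of_mapsTo (Set.toFinite _) (Set.toFinite _) hmaps β hfiber
    _ ≤ β * G.pathDeg v k := Nat.mul_le_mul_left β (le_max_left _ _)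
    _ = G.pathDeg v k * β := Nat.mul_comm _ _

theorem ncard_cyclesThrough_le [Finite V] {v : ℕ → V} {k : ℕ} (hk : 1 ≤ k)
    (hinj : Set.InjOn v (Set.Icc 1 k)) :
    (G.cyclesThrough v k).ncard ≤ G.pathDeg v k * G.extensionBound (Nat.card V) v k :=
  ncard_cyclesThrough_le_of_forall_pathNext hk hinj fun u hu =>
    ncard_cyclesThrough_le (Nat.le_add_left 1 k) (injOn_update_of_mem_pathNext hinj hu)
termination_by Nat.card V - k
decreasing_by
  have := le_card_of_injOn (injOn_update_of_mem_pathNext hinj hu)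
  omega

end SimpleGraph

theorem cycles_through_path_le_general {V : Type*} [Fintype V] (G : SimpleGraph V)
    (n : ℕ) (hcard : Fintype.card V = n)
    (k : ℕ) (hk1 : 1 ≤ k)
    (v : ℕ → V)
    (hinj : ∀ i j, 1 ≤ i → i ≤ k → 1 ≤ j → j ≤ k → v i = v j → i = j)
    (hF : (G.neighborSet (v k) \ (v '' {i | 1 ≤ i ∧ i ≤ k - 1})).Nonempty) :
    {H : G.Subgraph | H.IsCycleSub ∧ (∀ i, 1 ≤ i → i ≤ k → v i ∈ H.verts) ∧
        ∀ i, 1 ≤ i → i < k → H.Adj (v i) (v (i + 1))}.ncard ≤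
      (max (G.neighborSet (v k) \ (v '' {i | 2 ≤ i ∧ i ≤ k - 1})).ncard 1) *
        sSup {P : ℕ | ∃ t, k + 1 ≤ t ∧ t ≤ n ∧ ∃ w : ℕ → V,
          (∀ i, i ≤ k → w i = v i) ∧
          (∀ j, k + 1 ≤ j → j ≤ t →
            w j ∈ G.neighborSet (w (j - 1)) \ (w '' {i | 1 ≤ i ∧ i ≤ j - 2})) ∧
          P = ∏ j ∈ Finset.Icc (k + 1) t,
            max (G.neighborSet (w j) \ (w '' {i | 2 ≤ i ∧ i ≤ j - 1})).ncard 1} := by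
  rw [← hcard, ← Nat.card_eq_fintype_card]
  have hinj' : Set.InjOn v (Set.Icc 1 k) := fun i hi j hj h => hinj i j hi.1 hi.2 hj.1 hj.2 h
  obtain ⟨u, hu⟩ := hF
  calc _ ≤ G.pathDeg v k * G.extensionBound (Nat.card V) v k :=
        G.ncard_cyclesThrough_le hk1 hinj'
    _ = _ := by
        rw [SimpleGraph.extensionBound_eq_sSup hu
          (SimpleGraph.le_card_of_injOn (SimpleGraph.injOn_update_of_mem_pathNext hinj' hu))]
        rfl

/-- Lemma: if `v 1, …, v k` is a path in `G` (a graph on `n ≥ 2` vertices, `k ≤ n - 1`)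
whose set `F(v₁,…,v_k) = N(v_k) \ {v₁,…,v_{k-1}}` is nonempty, then the number of cycles of
`G` containing the path `v₁⋯v_k` is at most `f(v₁,…,v_k)` times the supremum, over
`k+1 ≤ t ≤ n` and extensions `w` of the path with `w j ∈ F(w₁,…,w_{j-1})` for
`k+1 ≤ j ≤ t`, of the products `f(w₁,…,w_{k+1})⋯f(w₁,…,w_t)`, where
`f(v₁,…,v_j) = max |N(v_j) \ {v₂,…,v_{j-1}}| 1`. -/
theorem cycles_through_path_le {V : Type*} [Fintype V] (G : SimpleGraph V)
    (n : ℕ) (hn : 2 ≤ n) (hcard : Fintype.card V = n)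
    (k : ℕ) (hk1 : 1 ≤ k) (hkn : k ≤ n - 1)
    (v : ℕ → V)
    (hadj : ∀ i, 1 ≤ i → i < k → G.Adj (v i) (v (i + 1)))
    (hinj : ∀ i j, 1 ≤ i → i ≤ k → 1 ≤ j → j ≤ k → v i = v j → i = j)
    (hF : (G.neighborSet (v k) \ (v '' {i | 1 ≤ i ∧ i ≤ k - 1})).Nonempty) :
    {H : G.Subgraph | H.IsCycleSub ∧ (∀ i, 1 ≤ i → i ≤ k → v i ∈ H.verts) ∧
        ∀ i, 1 ≤ i → i < k → H.Adj (v i) (v (i + 1))}.ncard ≤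
      (max (G.neighborSet (v k) \ (v '' {i | 2 ≤ i ∧ i ≤ k - 1})).ncard 1) *
        sSup {P : ℕ | ∃ t, k + 1 ≤ t ∧ t ≤ n ∧ ∃ w : ℕ → V,
          (∀ i, i ≤ k → w i = v i) ∧
          (∀ j, k + 1 ≤ j → j ≤ t →
            w j ∈ G.neighborSet (w (j - 1)) \ (w '' {i | 1 ≤ i ∧ i ≤ j - 2})) ∧
          P = ∏ j ∈ Finset.Icc (k + 1) t,
            max (G.neighborSet (w j) \ (w '' {i | 2 ≤ i ∧ i ≤ j - 1})).ncard 1} :=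
  cycles_through_path_le_general G n hcard k hk1 v hinj hF
end

section
/- For every positive integer m, C(m) < 8.25·3^{m/3}. -/
set_option linter.unusedSectionVars false
set_option linter.unusedVariables false
set_option maxHeartbeats 1600000

open SimpleGraph Set

section Aux

variable {V : Type*} [Fintype V]

private lemma cube_le_three_pow (d : ℕ) : d ^ 3 ≤ 3 ^ d := by
  induction d with
  | zero => norm_num
  | succ n ih =>
    rcases Nat.lt_or_ge n 3 with h | h
    · interval_cases n <;> norm_num
    · have h1 : 3 * (n + 1) ≤ 4 * n := by omega
      have h2 : (3 * (n+1))^3 ≤ (4*n)^3 := Nat.pow_le_pow_left h1 3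
      have h3 : 27 * (n+1)^3 ≤ 64 * n^3 := by ring_nf at h2 ⊢; omega
      have h4 : (n+1)^3 ≤ 3 * n^3 := by omega
      calc (n+1)^3 ≤ 3 * n^3 := h4
        _ ≤ 3 * 3^n := by omega
        _ = 3^(n+1) := by ring

private lemma finite_pathSet (A : SimpleGraph V) (u v : V) :
    {p : A.Walk u v | p.IsPath}.Finite := by
  classical
  have h : Finite (A.Path u v) := inferInstance
  have : Finite ↑{p : A.Walk u v | p.IsPath} := Finite.of_equiv (A.Path u v) (Equiv.refl _)
  exact Set.toFinite _

private lemma ncard_pathSet_self (A : SimpleGraph V) (u : V) :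
    {p : A.Walk u u | p.IsPath}.ncard = 1 := by
  have h : {p : A.Walk u u | p.IsPath} = {Walk.nil} := by
    ext p
    simp only [mem_setOf_eq, mem_singleton_iff]
    constructor
    · intro hp
      cases p with
      | nil => rfl
      | cons h q =>
        exact absurd q.end_mem_support ((Walk.cons_isPath_iff _ _).mp hp).2
    · rintro rfl; exact Walk.IsPath.nil
  rw [h]; exact Set.ncard_singleton _

private lemma edges_eq_cons_tail (A : SimpleGraph V) {u v : V} (p : A.Walk u v) (hnil : ¬ p.Nil) :
    p.edges = s(u, p.getVert 1) :: p.tail.edges := by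
  conv_lhs => rw [← Walk.cons_tail_eq p hnil]
  rw [Walk.edges_cons]

private lemma tail_stuff (A : SimpleGraph V) {u v : V} (huv : u ≠ v) (p : A.Walk u v)
    (hp : p.IsPath) :
    p.tail.IsPath ∧ u ∉ p.tail.support ∧
      ∀ e ∈ p.tail.edges, e ∈ (A.deleteEdges (A.incidenceSet u)).edgeSet := by
  have hnil : ¬ p.Nil := Walk.not_nil_of_ne huv
  have hp' := hp
  rw [← Walk.cons_tail_eq p hnil, Walk.cons_isPath_iff] at hp'
  refine ⟨hp'.1, hp'.2, fun e he => ?_⟩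
  rw [SimpleGraph.edgeSet_deleteEdges]
  have hpe : e ∈ p.edges := by
    rw [edges_eq_cons_tail A p hnil]
    exact List.mem_cons_of_mem _ he
  refine ⟨Walk.edges_subset_edgeSet p hpe, ?_⟩
  intro hinc
  have humem : u ∈ e := hinc.2
  induction e with
  | h a b =>
    rcases Sym2.mem_iff.mp humem with rfl | rfl
    · exact hp'.2 (p.tail.fst_mem_support_of_mem_edges he)
    · exact hp'.2 (p.tail.snd_mem_support_of_mem_edges he)

private lemma pcount : ∀ (k : ℕ) (A : SimpleGraph V), A.edgeSet.ncard = k →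
    ∀ u v : V, {p : A.Walk u v | p.IsPath}.ncard ^ 3 ≤ 3 ^ k := by
  intro k
  induction k using Nat.strong_induction_on with
  | _ k IH =>
    intro A hk u v
    classical
    by_cases huv : u = v
    · subst huv
      rw [ncard_pathSet_self]
      simpa using Nat.one_le_pow k 3 (by norm_num)
    · by_cases hd0 : (A.neighborSet u).ncard = 0
      · have hempty : {p : A.Walk u v | p.IsPath} = ∅ := by
          ext p
          simp only [mem_setOf_eq, mem_empty_iff_false, iff_false]
          intro hp
          have hnil : ¬ p.Nil := Walk.not_nil_of_ne huv
          have hadj : p.getVert 1 ∈ A.neighborSet u := p.adj_snd hnil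
          rw [Set.ncard_eq_zero (Set.toFinite _)] at hd0
          rw [hd0] at hadj
          exact hadj
        rw [hempty]
        simpa [Set.ncard_empty] using Nat.zero_le _
      · set d := (A.neighborSet u).ncard with hd
        set A' := A.deleteEdges (A.incidenceSet u) with hA'
        have hincsub : A.incidenceSet u ⊆ A.edgeSet := A.incidenceSet_subset u
        have hinccard : (A.incidenceSet u).ncard = d := by
          rw [hd, ← Nat.card_coe_set_eq, ← Nat.card_coe_set_eq]
          exact Nat.card_congr (A.incidenceSetEquivNeighborSet u)
        have hA'edges : A'.edgeSet = A.edgeSet \ A.incidenceSet u :=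
          A.edgeSet_deleteEdges _
        have hdk : d ≤ k := by
          rw [← hk, ← hinccard]; exact Set.ncard_le_ncard hincsub (Set.toFinite _)
        have hk' : A'.edgeSet.ncard = k - d := by
          rw [hA'edges, Set.ncard_diff hincsub (Set.toFinite _), hinccard, hk]
        have hle : A' ≤ A := SimpleGraph.deleteEdges_le _
        have hleE : ∀ {a b : V} (q : A'.Walk a b), ∀ e ∈ q.edges, e ∈ A.edgeSet :=
          fun q e he => (hA'edges ▸ Walk.edges_subset_edgeSet q he).1
        let F : {p : A.Walk u v // p.IsPath} →
            Σ w : A.neighborSet u, {q : A'.Walk w v // q.IsPath} := fun pp =>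
          ⟨⟨pp.1.getVert 1, pp.1.adj_snd (Walk.not_nil_of_ne huv)⟩,
            ⟨(pp.1.tail).transfer A' (tail_stuff A huv pp.1 pp.2).2.2,
              Walk.IsPath.transfer _ (tail_stuff A huv pp.1 pp.2).1⟩⟩
        let recon : (Σ w : A.neighborSet u, {q : A'.Walk w v // q.IsPath}) → A.Walk u v :=
          fun z => Walk.cons z.1.2 (z.2.1.transfer A (hleE z.2.1))
        have hrecon : ∀ pp : {p : A.Walk u v // p.IsPath}, recon (F pp) = pp.1 := by
          rintro ⟨p, hp⟩
          show Walk.cons _ ((p.tail.transfer A' _).transfer A _) = p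
          rw [Walk.transfer_transfer, Walk.transfer_self]
          exact Walk.cons_tail_eq p (Walk.not_nil_of_ne huv)
        have hinj : Function.Injective F := fun a b h =>
          Subtype.ext (by rw [← hrecon a, ← hrecon b, h])
        haveI hfib : ∀ w : V, Finite {q : A'.Walk w v // q.IsPath} := fun w =>
          (finite_pathSet A' w v).to_subtype
        haveI : ∀ w : A.neighborSet u, Fintype {q : A'.Walk (w : V) v // q.IsPath} :=
          fun w => Fintype.ofFinite _
        haveI : Fintype (A.neighborSet u) := Fintype.ofFinite _
        have hcard1 : {p : A.Walk u v | p.IsPath}.ncard ≤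
            Nat.card (Σ w : A.neighborSet u, {q : A'.Walk w v // q.IsPath}) := by
          rw [← Nat.card_coe_set_eq]
          exact Nat.card_le_card_of_injective F hinj
        have hcardT : Nat.card (Σ w : A.neighborSet u, {q : A'.Walk w v // q.IsPath}) =
            ∑ w : A.neighborSet u, Nat.card {q : A'.Walk (w : V) v // q.IsPath} := by
          rw [Nat.card_eq_fintype_card, Fintype.card_sigma]
          exact Finset.sum_congr rfl fun w _ => (Nat.card_eq_fintype_card).symm
        set N : A.neighborSet u → ℕ :=
          fun w => Nat.card {q : A'.Walk (w : V) v // q.IsPath} with hN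
        have hNw : ∀ w : A.neighborSet u, (N w)^3 ≤ 3^(k-d) := by
          intro w
          have h1 := IH (k - d) (by omega) A' hk' w v
          have h2 : N w = {q : A'.Walk (w : V) v | q.IsPath}.ncard :=
            Nat.card_coe_set_eq _
          rw [h2]; exact h1
        have hne : Nonempty (A.neighborSet u) := by
          exact (Set.nonempty_of_ncard_ne_zero hd0).to_subtype
        obtain ⟨w0, _, hw0⟩ := Finset.exists_mem_eq_sup (Finset.univ : Finset (A.neighborSet u))
          Finset.univ_nonempty N
        have hcardnbr : Fintype.card (A.neighborSet u) = d := by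
          rw [hd, ← Nat.card_coe_set_eq, Nat.card_eq_fintype_card]
        have hsum : ∑ w : A.neighborSet u, N w ≤ d * N w0 := by
          have h3 := Finset.sum_le_card_nsmul Finset.univ N (N w0)
            (fun w _ => hw0 ▸ Finset.le_sup (Finset.mem_univ w))
          rwa [Finset.card_univ, hcardnbr, smul_eq_mul] at h3
        calc {p : A.Walk u v | p.IsPath}.ncard ^ 3
            ≤ (∑ w : A.neighborSet u, N w) ^ 3 := by
              rw [← hcardT]; exact Nat.pow_le_pow_left hcard1 3
          _ ≤ (d * N w0) ^ 3 := Nat.pow_le_pow_left hsum 3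
          _ = d ^ 3 * (N w0) ^ 3 := by ring
          _ ≤ 3 ^ d * 3 ^ (k - d) := Nat.mul_le_mul (cube_le_three_pow d) (hNw w0)
          _ = 3 ^ k := by rw [← pow_add]; congr 1; omega

private lemma internal_two_edges (A : SimpleGraph V) {a b x : V} (p : A.Walk a b)
    (hp : p.IsPath) (hx : x ∈ p.support) (hxa : x ≠ a) (hxb : x ≠ b) :
    ∃ y z : V, y ≠ z ∧ s(x,y) ∈ p.edges ∧ s(x,z) ∈ p.edges := by
  classical
  set q := p.takeUntil x hx with hqdef
  set r := p.dropUntil x hx with hrdef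
  have happ : q.append r = p := p.take_spec hx
  have hedges : p.edges = q.edges ++ r.edges := by rw [← happ, Walk.edges_append]
  have hnodup : p.edges.Nodup := hp.isTrail.edges_nodup
  have hrnil : ¬ r.Nil := Walk.not_nil_of_ne hxb
  set qr := q.reverse with hqrdef
  have hqrnil : ¬ qr.Nil := Walk.not_nil_of_ne hxa
  have hyedge : s(x, qr.getVert 1) ∈ qr.edges := by
    rw [edges_eq_cons_tail A qr hqrnil]; exact List.mem_cons_self
  have hyq : s(x, qr.getVert 1) ∈ q.edges := by
    have h2 := hyedge
    rw [hqrdef, Walk.edges_reverse] at h2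
    exact List.mem_reverse.mp h2
  have hzedge : s(x, r.getVert 1) ∈ r.edges := by
    rw [edges_eq_cons_tail A r hrnil]; exact List.mem_cons_self
  refine ⟨qr.getVert 1, r.getVert 1, ?_, ?_, ?_⟩
  · intro he
    rw [hedges] at hnodup
    exact (List.disjoint_of_nodup_append hnodup) hyq (he ▸ hzedge)
  · rw [hedges]; exact List.mem_append_left _ hyq
  · rw [hedges]; exact List.mem_append_right _ hzedge

private lemma pathstruct : ∀ (k : ℕ) (A : SimpleGraph V), A.edgeSet.ncard = k →
    (∀ x : V, (A.neighborSet x).ncard ≤ 2) →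
    ∀ u : V, (A.neighborSet u).ncard ≤ 1 →
    (∀ x : V, (A.neighborSet x).Nonempty → A.Reachable u x) →
    ∃ (w : V) (p : A.Walk u w), p.IsPath ∧ {e | e ∈ p.edges} = A.edgeSet := by
  intro k
  induction k using Nat.strong_induction_on with
  | _ k IH =>
    intro A hk hdeg u hu hreach
    classical
    by_cases hu0 : (A.neighborSet u).ncard = 0
    · have hunb : A.neighborSet u = ∅ := (Set.ncard_eq_zero (toFinite _)).mp hu0
      have hE : A.edgeSet = ∅ := by
        ext e
        simp only [mem_empty_iff_false, iff_false]
        induction e with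
        | h a b =>
          intro he
          rw [SimpleGraph.mem_edgeSet] at he
          obtain ⟨p⟩ := hreach a ⟨b, he⟩
          by_cases hnil : p.Nil
          · have hua : u = a := hnil.eq
            subst hua
            have : b ∈ A.neighborSet u := he
            rw [hunb] at this; exact this
          · have : p.getVert 1 ∈ A.neighborSet u := p.adj_snd hnil
            rw [hunb] at this; exact this
      exact ⟨u, Walk.nil, Walk.IsPath.nil, by rw [hE]; ext e; simp⟩
    · have hu1 : (A.neighborSet u).ncard = 1 := by omega
      obtain ⟨c, hc⟩ := Set.ncard_eq_one.mp hu1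
      have huc : A.Adj u c := by
        have : c ∈ A.neighborSet u := by rw [hc]; exact rfl
        exact this
      have hucne : u ≠ c := huc.ne
      set A' := A.deleteEdges {s(u,c)} with hA'def
      have hA'adj : ∀ x y : V, A'.Adj x y ↔ A.Adj x y ∧ s(x,y) ≠ s(u,c) := by
        intro x y; rw [hA'def, SimpleGraph.deleteEdges_adj]; simp
      have hA'E : A'.edgeSet = A.edgeSet \ {s(u,c)} := A.edgeSet_deleteEdges _
      have hucE : s(u,c) ∈ A.edgeSet := huc
      have hk1 : 1 ≤ k := by
        rw [← hk]
        exact (Set.ncard_pos (toFinite _)).mpr ⟨_, hucE⟩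
      have hk' : A'.edgeSet.ncard = k - 1 := by
        rw [hA'E, Set.ncard_diff_singleton_of_mem hucE, hk]
      have hsub' : ∀ x : V, A'.neighborSet x ⊆ A.neighborSet x :=
        fun x y hy => ((hA'adj x y).mp hy).1
      have hdeg' : ∀ x : V, (A'.neighborSet x).ncard ≤ 2 := fun x =>
        le_trans (Set.ncard_le_ncard (hsub' x) (toFinite _)) (hdeg x)
      have hnbu' : A'.neighborSet u = ∅ := by
        ext y
        simp only [mem_neighborSet, mem_empty_iff_false, iff_false]
        intro hy
        obtain ⟨h1, h2⟩ := (hA'adj u y).mp hy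
        have : y ∈ A.neighborSet u := h1
        rw [hc, mem_singleton_iff] at this
        subst this
        exact h2 rfl
      have hnbc' : A'.neighborSet c = A.neighborSet c \ {u} := by
        ext y
        simp only [mem_neighborSet, mem_diff, mem_singleton_iff]
        constructor
        · intro hy
          obtain ⟨h1, h2⟩ := (hA'adj c y).mp hy
          refine ⟨h1, ?_⟩
          rintro rfl
          exact h2 (by rw [Sym2.eq_swap])
        · rintro ⟨h1, h2⟩
          refine (hA'adj c y).mpr ⟨h1, ?_⟩
          intro hcy
          rw [Sym2.eq_swap] at hcy
          exact h2 (Sym2.congr_left.mp hcy.symm).symm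
      have hc1' : (A'.neighborSet c).ncard ≤ 1 := by
        rw [hnbc', Set.ncard_diff_singleton_of_mem
          ((SimpleGraph.mem_neighborSet _ _ _).mpr huc.symm)]
        have := hdeg c; omega
      have hreach' : ∀ x : V, (A'.neighborSet x).Nonempty → A'.Reachable c x := by
        rintro x ⟨y, hy⟩
        have hxu : x ≠ u := by
          rintro rfl
          rw [hnbu'] at hy
          exact hy
        obtain ⟨p0⟩ := hreach x ⟨y, hsub' x hy⟩
        set pw := p0.toPath.1 with hpwdef
        have hpwpath : pw.IsPath := p0.toPath.2
        have hnil : ¬ pw.Nil := Walk.not_nil_of_ne hxu.symm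
        have hg1 : pw.getVert 1 = c := by
          have h1 : pw.getVert 1 ∈ A.neighborSet u := pw.adj_snd hnil
          rw [hc, mem_singleton_iff] at h1
          exact h1
        have hps := hpwpath
        rw [← Walk.cons_tail_eq pw hnil, Walk.cons_isPath_iff] at hps
        have htedges : ∀ e ∈ pw.tail.edges, e ∈ A'.edgeSet := by
          intro e he
          rw [hA'E]
          have hpe : e ∈ pw.edges := by
            rw [edges_eq_cons_tail A pw hnil]
            exact List.mem_cons_of_mem _ he
          refine ⟨Walk.edges_subset_edgeSet _ hpe, ?_⟩
          intro hec
          rw [mem_singleton_iff] at hec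
          subst hec
          exact hps.2 (pw.tail.fst_mem_support_of_mem_edges he)
        exact ⟨(pw.tail.transfer A' htedges).copy hg1 rfl⟩
      obtain ⟨w, p', hp'path, hp'edges⟩ := IH (k-1) (by omega) A' hk' hdeg' c hc1' hreach'
      have hp'A : ∀ e ∈ p'.edges, e ∈ A.edgeSet := fun e he =>
        (hA'E ▸ Walk.edges_subset_edgeSet p' he).1
      have hup' : u ∉ p'.support := by
        intro hmem
        have hnil2 : ¬ (p'.takeUntil u hmem).reverse.Nil := Walk.not_nil_of_ne hucne
        have h3 : (p'.takeUntil u hmem).reverse.getVert 1 ∈ A'.neighborSet u :=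
          (p'.takeUntil u hmem).reverse.adj_snd hnil2
        rw [hnbu'] at h3
        exact h3
      refine ⟨w, Walk.cons huc (p'.transfer A hp'A), ?_, ?_⟩
      · rw [Walk.cons_isPath_iff]
        exact ⟨Walk.IsPath.transfer _ hp'path, by rwa [Walk.support_transfer]⟩
      · rw [Walk.edges_cons]
        ext e
        simp only [mem_setOf_eq, List.mem_cons, Walk.edges_transfer]
        constructor
        · rintro (rfl | he)
          · exact hucE
          · have : e ∈ A'.edgeSet := by
              rw [← hp'edges]; exact he
            rw [hA'E] at this; exact this.1
        · intro he
          by_cases hec : e = s(u,c)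
          · left; exact hec
          · right
            have : e ∈ A'.edgeSet := by rw [hA'E]; exact ⟨he, hec⟩
            rw [← hp'edges] at this
            exact this

private lemma spanningCoe_edgeSet {G : SimpleGraph V} (H : G.Subgraph) :
    H.spanningCoe.edgeSet = H.edgeSet := by
  ext e
  induction e with
  | h a b => rw [SimpleGraph.mem_edgeSet, Subgraph.mem_edgeSet, Subgraph.spanningCoe_adj]

private lemma cycstruct {G : SimpleGraph V} (H : G.Subgraph)
    (hconn : H.coe.Connected) (hdeg2 : ∀ x ∈ H.verts, (H.neighborSet x).ncard = 2)
    {u v : V} (huv : H.Adj u v) :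
    ∃ p : (H.spanningCoe.deleteEdges {s(u,v)}).Walk u v,
      p.IsPath ∧ {e | e ∈ p.edges} = H.edgeSet \ {s(u,v)} := by
  classical
  set A := H.spanningCoe.deleteEdges {s(u,v)} with hAdef
  have hAadj : ∀ x y : V, A.Adj x y ↔ H.Adj x y ∧ s(x,y) ≠ s(u,v) := by
    intro x y
    rw [hAdef, SimpleGraph.deleteEdges_adj, Subgraph.spanningCoe_adj]
    simp
  have hAE : A.edgeSet = H.edgeSet \ {s(u,v)} := by
    rw [hAdef, SimpleGraph.edgeSet_deleteEdges, spanningCoe_edgeSet]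
  have hAsub : ∀ x y : V, A.Adj x y → H.Adj x y := fun x y h => ((hAadj x y).mp h).1
  have hHnb2 : ∀ x : V, (H.neighborSet x).ncard ≤ 2 := by
    intro x
    by_cases hx : x ∈ H.verts
    · exact (hdeg2 x hx).le
    · have h0 : H.neighborSet x = ∅ := by
        ext y
        simp only [Subgraph.mem_neighborSet, mem_empty_iff_false, iff_false]
        exact fun h => hx h.fst_mem
      simp [h0]
  have huvne : u ≠ v := huv.ne
  have hu2 : (H.neighborSet u).ncard = 2 := hdeg2 u huv.fst_mem
  have hv2 : (H.neighborSet v).ncard = 2 := hdeg2 v huv.snd_mem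
  have hAnbu : A.neighborSet u = H.neighborSet u \ {v} := by
    ext y
    simp only [mem_neighborSet, Subgraph.mem_neighborSet, mem_diff, mem_singleton_iff, hAadj]
    constructor
    · rintro ⟨h1, h2⟩
      exact ⟨h1, fun hy => h2 (by rw [hy])⟩
    · rintro ⟨h1, h2⟩
      exact ⟨h1, fun hy => h2 (Sym2.congr_right.mp hy)⟩
  have hAnbv : A.neighborSet v = H.neighborSet v \ {u} := by
    ext y
    simp only [mem_neighborSet, Subgraph.mem_neighborSet, mem_diff, mem_singleton_iff, hAadj]
    constructor
    · rintro ⟨h1, h2⟩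
      refine ⟨h1, fun hy => h2 ?_⟩
      rw [hy, Sym2.eq_swap]
    · rintro ⟨h1, h2⟩
      refine ⟨h1, fun hy => h2 ?_⟩
      rw [Sym2.eq_swap] at hy
      exact Sym2.congr_left.mp hy
  have hAnbother : ∀ x : V, x ≠ u → x ≠ v → A.neighborSet x = H.neighborSet x := by
    intro x hxu hxv
    ext y
    simp only [mem_neighborSet, Subgraph.mem_neighborSet, hAadj]
    constructor
    · exact fun h => h.1
    · intro h
      refine ⟨h, fun hy => ?_⟩
      rcases Sym2.eq_iff.mp hy with ⟨h1, h2⟩ | ⟨h1, h2⟩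
      · exact hxu h1
      · exact hxv h1
  have hAnbucard : (A.neighborSet u).ncard = 1 := by
    rw [hAnbu, Set.ncard_diff_singleton_of_mem (show v ∈ H.neighborSet u from huv), hu2]
  have hAnbvcard : (A.neighborSet v).ncard = 1 := by
    rw [hAnbv, Set.ncard_diff_singleton_of_mem (show u ∈ H.neighborSet v from huv.symm), hv2]
  have hAnb2 : ∀ x : V, (A.neighborSet x).ncard ≤ 2 := fun x =>
    le_trans (Set.ncard_le_ncard (fun y hy => hAsub x y hy) (toFinite _)) (hHnb2 x)
  set S := {x : V | A.Reachable u x} with hSdef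
  have hSclosed : ∀ {x y : V}, A.Adj x y → x ∈ S → y ∈ S :=
    fun hxy hx => hx.trans hxy.reachable
  have husS : u ∈ S := Reachable.refl u
  have hneighbor_of_mem : ∀ x ∈ S, x ≠ u → (A.neighborSet x).Nonempty := by
    intro x hx hxu
    obtain ⟨p⟩ := (hx : A.Reachable u x)
    have hnil : ¬ p.reverse.Nil := Walk.not_nil_of_ne hxu
    exact ⟨p.reverse.getVert 1, p.reverse.adj_snd hnil⟩
  have hvS : v ∈ S := by
    by_contra hvS
    let B : SimpleGraph V :=
      { Adj := fun x y => A.Adj x y ∧ x ∈ S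
        symm := by
          constructor
          rintro x y ⟨hxy, hx⟩
          exact ⟨hxy.symm, hSclosed hxy hx⟩
        loopless := by
          constructor
          rintro x ⟨hxx, _⟩
          exact A.loopless.irrefl x hxx }
    haveI : DecidableRel B.Adj := Classical.decRel _
    have hhs := SimpleGraph.sum_degrees_eq_twice_card_edges B
    have hdegncard : ∀ x : V, B.degree x = (B.neighborSet x).ncard := by
      intro x
      rw [← SimpleGraph.card_neighborSet_eq_degree, ← Nat.card_coe_set_eq,
        Nat.card_eq_fintype_card]
    have hBnbS : ∀ x ∈ S.toFinset, B.neighborSet x = A.neighborSet x := by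
      intro x hx
      ext y
      simp only [mem_neighborSet]
      exact ⟨fun h => h.1, fun h => ⟨h, Set.mem_toFinset.mp hx⟩⟩
    have hBnb0 : ∀ x : V, x ∉ S.toFinset → B.degree x = 0 := by
      intro x hx
      rw [hdegncard]
      have : B.neighborSet x = ∅ := by
        ext y
        simp only [mem_neighborSet, mem_empty_iff_false, iff_false]
        rintro ⟨-, hxS⟩
        exact hx (Set.mem_toFinset.mpr hxS)
      simp [this]
    have hsum : ∑ x : V, B.degree x = ∑ x ∈ S.toFinset, (A.neighborSet x).ncard := by
      rw [← Finset.sum_subset (Finset.subset_univ S.toFinset) (fun x _ hx => hBnb0 x hx)]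
      exact Finset.sum_congr rfl fun x hx => by rw [hdegncard, hBnbS x hx]
    have heven : Even (∑ x ∈ S.toFinset, (A.neighborSet x).ncard) := by
      rw [← hsum, hhs]
      exact even_two_mul _
    have husF : u ∈ S.toFinset := Set.mem_toFinset.mpr husS
    rw [← Finset.add_sum_erase _ _ husF] at heven
    have hvals : ∀ x ∈ S.toFinset.erase u, (A.neighborSet x).ncard = 2 := by
      intro x hx
      have hxu : x ≠ u := Finset.ne_of_mem_erase hx
      have hxS : x ∈ S := Set.mem_toFinset.mp (Finset.mem_of_mem_erase hx)
      obtain ⟨y, hy⟩ := hneighbor_of_mem x hxS hxu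
      have hxv : x ≠ v := by rintro rfl; exact hvS hxS
      rw [hAnbother x hxu hxv]
      exact hdeg2 x (hAsub x y hy).fst_mem
    rw [Finset.sum_congr rfl hvals, Finset.sum_const, smul_eq_mul, hAnbucard] at heven
    obtain ⟨t, ht⟩ := heven
    omega
  have hreach : ∀ x : V, (A.neighborSet x).Nonempty → A.Reachable u x := by
    rintro x ⟨y, hy⟩
    by_cases hxu : x = u
    · subst hxu; exact Reachable.refl x
    have hxH : x ∈ H.verts := ((hAsub x y hy) : H.Adj x y).fst_mem
    have huH : u ∈ H.verts := huv.fst_mem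
    obtain ⟨pc⟩ := hconn.preconnected ⟨u, huH⟩ ⟨x, hxH⟩
    let f : H.coe →g H.spanningCoe := ⟨Subtype.val, fun {a b} hab => hab⟩
    have hqw := (pc.map f).toPath
    set qw : H.spanningCoe.Walk u x := hqw.1 with hqwdef
    have hqpath : qw.IsPath := hqw.2
    have hnil : ¬ qw.Nil := Walk.not_nil_of_ne (fun h => hxu h.symm)
    by_cases he : s(u,v) ∈ qw.edges
    · have hps := hqpath
      rw [← Walk.cons_tail_eq qw hnil, Walk.cons_isPath_iff] at hps
      have hg1 : qw.getVert 1 = v := by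
        rw [edges_eq_cons_tail _ qw hnil] at he
        rcases List.mem_cons.mp he with h1 | h2
        · exact (Sym2.congr_right.mp h1).symm
        · exact absurd (qw.tail.fst_mem_support_of_mem_edges h2) hps.2
      have htA : ∀ e ∈ qw.tail.edges, e ∈ A.edgeSet := by
        intro e he'
        rw [hAE, ← spanningCoe_edgeSet H]
        refine ⟨Walk.edges_subset_edgeSet _ (by
          rw [edges_eq_cons_tail _ qw hnil]
          exact List.mem_cons_of_mem _ he'), ?_⟩
        intro hec
        rw [mem_singleton_iff] at hec
        subst hec
        exact hps.2 (qw.tail.fst_mem_support_of_mem_edges he')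
      exact hvS.trans ⟨(qw.tail.transfer A htA).copy hg1 rfl⟩
    · have htA : ∀ e ∈ qw.edges, e ∈ A.edgeSet := by
        intro e he'
        rw [hAE, ← spanningCoe_edgeSet H]
        refine ⟨Walk.edges_subset_edgeSet _ he', ?_⟩
        intro hec
        rw [mem_singleton_iff] at hec
        subst hec
        exact he he'
      exact ⟨qw.transfer A htA⟩
  obtain ⟨w, p, hppath, hpedges⟩ :=
    pathstruct (A.edgeSet.ncard) A rfl hAnb2 u hAnbucard.le hreach
  have hvsupp : v ∈ p.support := by
    have hne : (A.neighborSet v).Nonempty :=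
      Set.nonempty_of_ncard_ne_zero (by rw [hAnbvcard]; exact one_ne_zero)
    obtain ⟨y, hy⟩ := hne
    have : s(v,y) ∈ A.edgeSet := hy
    rw [← hpedges] at this
    exact p.fst_mem_support_of_mem_edges this
  have hwv : w = v := by
    by_contra hwv
    obtain ⟨y, z, hyz, hyE, hzE⟩ := internal_two_edges A p hppath hvsupp huvne.symm
      (fun h => hwv h.symm)
    have hyn : y ∈ A.neighborSet v := by
      have : s(v,y) ∈ A.edgeSet := by rw [← hpedges]; exact hyE
      exact this
    have hzn : z ∈ A.neighborSet v := by
      have : s(v,z) ∈ A.edgeSet := by rw [← hpedges]; exact hzE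
      exact this
    have hsub2 : ({y, z} : Set V) ⊆ A.neighborSet v := by
      intro t ht
      rcases ht with rfl | ht
      · exact hyn
      · rw [mem_singleton_iff] at ht; subst ht; exact hzn
    have h2 : ({y, z} : Set V).ncard = 2 := Set.ncard_pair hyz
    have := Set.ncard_le_ncard hsub2 (toFinite _)
    rw [h2, hAnbvcard] at this
    omega
  subst hwv
  exact ⟨p, hppath, by rw [hpedges, hAE]⟩

private lemma finite_subgraph (G : SimpleGraph V) : Finite G.Subgraph := by
  classical
  refine Finite.of_injective (fun H => (H.verts, H.Adj)) ?_
  rintro H K h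
  rw [Prod.mk.injEq] at h
  exact SimpleGraph.Subgraph.ext h.1 h.2

private lemma cyc_eq_of_edgeSet_eq {G : SimpleGraph V} {H K : G.Subgraph}
    (hH : ∀ x ∈ H.verts, (H.neighborSet x).ncard = 2)
    (hK : ∀ x ∈ K.verts, (K.neighborSet x).ncard = 2)
    (h : H.edgeSet = K.edgeSet) : H = K := by
  have hadj : ∀ (M : G.Subgraph) (x y : V), M.Adj x y ↔ s(x,y) ∈ M.edgeSet :=
    fun M x y => (Subgraph.mem_edgeSet).symm
  have hAdjeq : H.Adj = K.Adj := by
    funext x y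
    rw [eq_iff_iff, hadj H, hadj K, h]
  refine SimpleGraph.Subgraph.ext ?_ hAdjeq
  have hverts : ∀ (M : G.Subgraph), (∀ x ∈ M.verts, (M.neighborSet x).ncard = 2) →
      M.verts = {x | ∃ y, M.Adj x y} := by
    intro M hM
    ext x
    constructor
    · intro hx
      have h2 : (M.neighborSet x).ncard = 2 := hM x hx
      obtain ⟨y, hy⟩ := Set.nonempty_of_ncard_ne_zero (by rw [h2]; omega)
      exact ⟨y, hy⟩
    · rintro ⟨y, hy⟩
      exact hy.fst_mem
  rw [hverts H hH, hverts K hK, hAdjeq]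

private lemma le_rpow_of_cube_le {a b : ℕ} (h : a^3 ≤ b) :
    (a:ℝ) ≤ (b:ℝ)^((1:ℝ)/3) := by
  have h1 : ((a:ℝ)^(3:ℕ)) ≤ (b:ℝ) := by exact_mod_cast h
  have h2 : ((a:ℝ)^(3:ℕ))^((1:ℝ)/3) ≤ (b:ℝ)^((1:ℝ)/3) :=
    Real.rpow_le_rpow (by positivity) h1 (by norm_num)
  calc (a:ℝ) = ((a:ℝ)^(3:ℕ))^((1:ℝ)/3) := by
        rw [← Real.rpow_natCast (a:ℝ) 3, ← Real.rpow_mul (by positivity)]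
        norm_num
    _ ≤ _ := h2

private lemma three_pow_cast (n : ℕ) :
    (((3:ℕ)^n : ℕ) : ℝ)^((1:ℝ)/3) = (3:ℝ)^((n:ℝ)/3) := by
  push_cast
  rw [← Real.rpow_natCast (3:ℝ) n, ← Real.rpow_mul (by norm_num)]
  ring_nf

private lemma maincount (k : ℕ) : ∀ (G : SimpleGraph V), G.edgeSet.ncard = k →
    (({H : G.Subgraph | H.IsCycleSub}.ncard : ℝ)) ≤
      ∑ i ∈ Finset.range k, (3:ℝ)^((i:ℝ)/3) := by
  induction k with
  | zero =>
    intro G hk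
    have hE : G.edgeSet = ∅ := (Set.ncard_eq_zero (Set.toFinite _)).mp hk
    have hempty : {H : G.Subgraph | H.IsCycleSub} = ∅ := by
      ext H
      simp only [mem_setOf_eq, mem_empty_iff_false, iff_false]
      rintro ⟨hconn, hdeg⟩
      obtain ⟨⟨x, hx⟩⟩ := hconn.nonempty
      obtain ⟨y, hy⟩ := Set.nonempty_of_ncard_ne_zero (by rw [hdeg x hx]; omega)
      have : s(x,y) ∈ G.edgeSet := (hy : H.Adj x y).adj_sub
      rw [hE] at this
      exact this
    rw [hempty]
    simp
  | succ n ih =>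
    intro G hk
    classical
    haveI := finite_subgraph G
    obtain ⟨e, he⟩ := Set.nonempty_of_ncard_ne_zero (by rw [hk]; omega :
      G.edgeSet.ncard ≠ 0)
    induction e with
    | h u v =>
      have huv : G.Adj u v := G.mem_edgeSet.mp he
      set G' := G.deleteEdges {s(u,v)} with hG'def
      haveI := finite_subgraph G'
      have hG'E : G'.edgeSet = G.edgeSet \ {s(u,v)} := G.edgeSet_deleteEdges _
      have hG'card : G'.edgeSet.ncard = n := by
        rw [hG'E, Set.ncard_diff_singleton_of_mem he, hk]
        omega
      set C := {H : G.Subgraph | H.IsCycleSub} with hCdef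
      set C1 := {H : G.Subgraph | H.IsCycleSub ∧ H.Adj u v} with hC1def
      set C2 := {H : G.Subgraph | H.IsCycleSub ∧ ¬ H.Adj u v} with hC2def
      have hCsplit : C ⊆ C1 ∪ C2 := by
        intro H hH
        by_cases h : H.Adj u v
        · exact Or.inl ⟨hH, h⟩
        · exact Or.inr ⟨hH, h⟩
      have hCle : C.ncard ≤ C1.ncard + C2.ncard :=
        le_trans (Set.ncard_le_ncard hCsplit (Set.toFinite _)) (Set.ncard_union_le _ _)
      -- C2 bound
      have hC2le : C2.ncard ≤ {H : G'.Subgraph | H.IsCycleSub}.ncard := by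
        set Φ : G.Subgraph → G'.Subgraph := fun H =>
          { verts := H.verts
            Adj := fun x y => H.Adj x y ∧ s(x,y) ≠ s(u,v)
            adj_sub := by
              rintro x y ⟨h1, h2⟩
              rw [hG'def, SimpleGraph.deleteEdges_adj]
              exact ⟨h1.adj_sub, by simpa using h2⟩
            edge_vert := by
              rintro x y ⟨h1, -⟩
              exact h1.fst_mem
            symm := by
              constructor
              rintro x y ⟨h1, h2⟩
              exact ⟨h1.symm, by rwa [Sym2.eq_swap]⟩ } with hΦdef
        have hΦverts : ∀ H : G.Subgraph, (Φ H).verts = H.verts := fun _ => rfl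
        have hΦadj : ∀ H ∈ C2, ∀ x y : V, (Φ H).Adj x y ↔ H.Adj x y := by
          rintro H ⟨-, hHe⟩ x y
          constructor
          · exact fun h => h.1
          · intro h
            refine ⟨h, fun hc => ?_⟩
            rcases Sym2.eq_iff.mp hc with ⟨rfl, rfl⟩ | ⟨rfl, rfl⟩
            · exact hHe h
            · exact hHe h.symm
        refine Set.ncard_le_ncard_of_injOn Φ ?_ ?_ (Set.toFinite _)
        · rintro H hH
          obtain ⟨⟨hconn, hdeg⟩, hHe⟩ := hH
          have hcoe : (Φ H).coe = H.coe := by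
            ext a b
            exact hΦadj H ⟨⟨hconn, hdeg⟩, hHe⟩ a b
          have hnb : ∀ x : V, (Φ H).neighborSet x = H.neighborSet x := by
            intro x
            ext y
            exact hΦadj H ⟨⟨hconn, hdeg⟩, hHe⟩ x y
          constructor
          · rw [hcoe]; exact hconn
          · intro x hx
            rw [hnb x]
            exact hdeg x hx
        · rintro H hH K hK h
          have hverts : H.verts = K.verts := by
            rw [← hΦverts H, ← hΦverts K, h]
          have hadj : ∀ x y : V, H.Adj x y ↔ K.Adj x y := by
            intro x y
            rw [← hΦadj H hH x y, ← hΦadj K hK x y, h]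
          exact SimpleGraph.Subgraph.ext hverts (by funext x y; rw [eq_iff_iff]; exact hadj x y)
      -- C1 bound
      have hC1le : C1.ncard ≤ {p : G'.Walk u v | p.IsPath}.ncard := by
        have hex : ∀ H ∈ C1, ∃ p : G'.Walk u v,
            p.IsPath ∧ {e' | e' ∈ p.edges} = H.edgeSet \ {s(u,v)} := by
          rintro H ⟨⟨hconn, hdeg⟩, hHuv⟩
          obtain ⟨p0, hp0path, hp0edges⟩ := cycstruct H hconn hdeg hHuv
          have hsub : ∀ e' ∈ p0.edges, e' ∈ G'.edgeSet := by
            intro e' he'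
            have : e' ∈ H.edgeSet \ {s(u,v)} := by rw [← hp0edges]; exact he'
            rw [hG'E]
            exact ⟨H.edgeSet_subset this.1, this.2⟩
          refine ⟨p0.transfer G' hsub, Walk.IsPath.transfer _ hp0path, ?_⟩
          rw [← hp0edges]
          ext e'
          simp [Walk.edges_transfer]
        rcases Set.eq_empty_or_nonempty C1 with hC1e | ⟨H0, hH0⟩
        · rw [hC1e]; simp
        obtain ⟨p0, -, -⟩ := hex H0 hH0
        set F : G.Subgraph → G'.Walk u v := fun H =>
          if h : H ∈ C1 then Classical.choose (hex H h) else p0 with hFdef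
        refine Set.ncard_le_ncard_of_injOn F ?_ ?_ (finite_pathSet G' u v)
        · intro H hH
          rw [hFdef]
          simp only [dif_pos hH]
          exact (Classical.choose_spec (hex H hH)).1
        · intro H hH K hK h
          rw [hFdef] at h
          simp only [dif_pos hH, dif_pos hK] at h
          have h1 := (Classical.choose_spec (hex H hH)).2
          have h2 := (Classical.choose_spec (hex K hK)).2
          have ht : {e' | e' ∈ (Classical.choose (hex H hH)).edges} =
              {e' | e' ∈ (Classical.choose (hex K hK)).edges} := by rw [h]
          have hdiff : H.edgeSet \ {s(u,v)} = K.edgeSet \ {s(u,v)} :=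
            h1.symm.trans (ht.trans h2)
          have hHe : s(u,v) ∈ H.edgeSet := hH.2
          have hKe : s(u,v) ∈ K.edgeSet := hK.2
          have hES : H.edgeSet = K.edgeSet := by
            rw [← Set.diff_union_of_subset (Set.singleton_subset_iff.mpr hHe),
              ← Set.diff_union_of_subset (Set.singleton_subset_iff.mpr hKe), hdiff]
          exact cyc_eq_of_edgeSet_eq hH.1.2 hK.1.2 hES
      -- path count bound
      have hpc := pcount n G' hG'card u v
      have hpcR : ({p : G'.Walk u v | p.IsPath}.ncard : ℝ) ≤ (3:ℝ)^((n:ℝ)/3) := by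
        have := le_rpow_of_cube_le (a := {p : G'.Walk u v | p.IsPath}.ncard) (b := 3^n) hpc
        rwa [three_pow_cast] at this
      have hihR := ih G' hG'card
      calc (C.ncard : ℝ) ≤ ((C1.ncard + C2.ncard : ℕ) : ℝ) := by exact_mod_cast hCle
        _ ≤ (3:ℝ)^((n:ℝ)/3) + ∑ i ∈ Finset.range n, (3:ℝ)^((i:ℝ)/3) := by
            push_cast
            refine add_le_add ?_ ?_
            · exact le_trans (by exact_mod_cast hC1le) hpcR
            · exact le_trans (by exact_mod_cast hC2le) hihR
        _ = ∑ i ∈ Finset.range (n+1), (3:ℝ)^((i:ℝ)/3) := by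
            rw [Finset.sum_range_succ]
            ring

private lemma geom_bound (m : ℕ) :
    ∑ i ∈ Finset.range m, (3:ℝ)^((i:ℝ)/3) < 8.25 * (3:ℝ)^((m:ℝ)/3) := by
  set x : ℝ := (3:ℝ)^((1:ℝ)/3) with hxdef
  have hxpow : ∀ i : ℕ, (3:ℝ)^((i:ℝ)/3) = x^i := by
    intro i
    have h1 : (i:ℝ)/3 = (1:ℝ)/3 * i := by ring
    rw [h1, Real.rpow_mul (by norm_num), Real.rpow_natCast]
  have hx13 : (1.13:ℝ) ≤ x := by
    have h0 : (1.13:ℝ) = ((1.13:ℝ)^(3:ℕ))^((1:ℝ)/3) := by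
      rw [← Real.rpow_natCast (1.13:ℝ) 3, ← Real.rpow_mul (by norm_num)]
      norm_num
    rw [h0, hxdef]
    exact Real.rpow_le_rpow (by positivity) (by norm_num) (by norm_num)
  have hxne1 : x ≠ 1 := by intro h; rw [h] at hx13; norm_num at hx13
  have hxm : (0:ℝ) < x^m := pow_pos (by linarith) m
  have hgeom : ∑ i ∈ Finset.range m, x^i = (x^m - 1)/(x - 1) := geom_sum_eq hxne1 m
  have hsum : ∑ i ∈ Finset.range m, (3:ℝ)^((i:ℝ)/3) = (x^m - 1)/(x - 1) := by
    rw [← hgeom]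
    exact Finset.sum_congr rfl fun i _ => hxpow i
  rw [hsum, hxpow m, div_lt_iff₀ (by linarith : (0:ℝ) < x - 1)]
  nlinarith [hxm, hx13]

end Aux

/-- For every positive integer `m`, `C(m) < 8.25 · 3^(m/3)`. -/
theorem maxCycles_lt (m : ℕ) (hm : 0 < m) :
    (maxCycles m : ℝ) < 8.25 * (3 : ℝ) ^ ((m : ℝ) / 3) := by
  classical
  set S : ℝ := ∑ i ∈ Finset.range m, (3:ℝ)^((i:ℝ)/3) with hSdef
  have hS0 : 0 ≤ S :=
    Finset.sum_nonneg fun i _ => le_of_lt (Real.rpow_pos_of_pos (by norm_num) _)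
  have hbound : ∀ c ∈ {c : ℕ | ∃ (n : ℕ) (G : SimpleGraph (Fin n)),
      G.edgeSet.ncard = m ∧ c = G.cycleCount}, (c:ℝ) ≤ S := by
    rintro c ⟨n, G, hGE, rfl⟩
    exact maincount m G hGE
  have hmax : maxCycles m ≤ Nat.floor S := by
    rw [maxCycles]
    rcases Set.eq_empty_or_nonempty {c : ℕ | ∃ (n : ℕ) (G : SimpleGraph (Fin n)),
        G.edgeSet.ncard = m ∧ c = G.cycleCount} with h | h
    · rw [h, csSup_empty]
      exact Nat.zero_le _
    · exact csSup_le h fun c hc => Nat.le_floor (hbound c hc)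
  calc (maxCycles m : ℝ) ≤ (Nat.floor S : ℝ) := by exact_mod_cast hmax
    _ ≤ S := Nat.floor_le hS0
    _ < _ := geom_bound m
end

section
/- For all integers n ≥ 3, P(n) = 4·P(n−1) + 4·P(n−2), where P(n) is the number of paths from u₁ to u_{n+1} in the graph H_n. -/
/-- The graph `Hₙ` on vertices `u₀,…,uₙ` (left) and `v₀,…,vₙ` (right), 0-indexed:
`uᵢ ~ uᵢ₊₁`, `vᵢ ~ vᵢ₊₁`, and `uᵢ ~ vⱼ` whenever `|i - j| ≤ 1`. -/
def Hgraph (n : ℕ) : SimpleGraph (Fin (n + 1) ⊕ Fin (n + 1)) :=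
  SimpleGraph.fromRel (fun a b =>
    match a, b with
    | .inl i, .inl j => (i : ℕ) + 1 = (j : ℕ)
    | .inr i, .inr j => (i : ℕ) + 1 = (j : ℕ)
    | .inl i, .inr j => (i : ℕ) ≤ (j : ℕ) + 1 ∧ (j : ℕ) ≤ (i : ℕ) + 1
    | .inr _, .inl _ => False)

/-- `P(n)`: the number of paths in `Hₙ` from `u₁` (i.e. `inl 0`) to `u_{n+1}`
(i.e. `inl (Fin.last n)`). -/
noncomputable def Pnum (n : ℕ) : ℕ :=
  {p : (Hgraph n).Walk (Sum.inl 0) (Sum.inl (Fin.last n)) | p.IsPath}.ncard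


open SimpleGraph Walk Set

variable {V : Type*} [Finite V] {G : SimpleGraph V}

/-- Paths from `a` to `b` avoiding the set `A`. -/
def pset (G : SimpleGraph V) (a b : V) (A : Set V) : Set (G.Walk a b) :=
  {p | p.IsPath ∧ ∀ v ∈ A, v ∉ p.support}

lemma pset_finite (a b : V) (A : Set V) : (pset G a b A).Finite := by
  classical
  have : Finite V := ‹_›
  have hf : ({p : G.Walk a b | p.IsPath}).Finite := by
    haveI : Fintype V := Fintype.ofFinite V
    haveI : DecidableRel G.Adj := Classical.decRel _
    haveI : Finite ↑{p : G.Walk a b | p.IsPath} :=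
      Finite.of_equiv (G.Path a b) (Equiv.refl _)
    exact Set.finite_coe_iff.mp this
  exact hf.subset (fun p hp => hp.1)

omit [Finite V] in
lemma ncard_split (s : Set α) (hs : s.Finite) (P : α → Prop) :
    s.ncard = {x ∈ s | P x}.ncard + {x ∈ s | ¬ P x}.ncard := by
  classical
  rw [← Set.ncard_union_eq ?_ (hs.subset (by intro x hx; exact hx.1))
    (hs.subset (by intro x hx; exact hx.1))]
  · congr 1
    ext x; by_cases h : P x <;> simp [h]
  · rw [Set.disjoint_left]; rintro x ⟨-, h⟩ ⟨-, h'⟩; exact h' h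

omit [Finite V] in
/-- The second vertex of a nontrivial path in `pset`. -/
lemma getVert1_spec {a b : V} {A : Set V} {p : G.Walk a b} (hp : p ∈ pset G a b A)
    (hab : a ≠ b) : G.Adj a (p.getVert 1) ∧ p.getVert 1 ∉ A ∧ p.getVert 1 ∈ p.support := by
  cases p with
  | nil => exact absurd rfl hab
  | cons h q =>
    refine ⟨by simpa [Walk.getVert_cons_succ, Walk.getVert_zero] using h, ?_, ?_⟩
    · intro hA
      exact hp.2 _ hA (by simp [Walk.getVert_cons_succ, Walk.getVert_zero])
    · simp [Walk.getVert_cons_succ, Walk.getVert_zero]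

omit [Finite V] in
lemma ncard_pset_getVert1 {a b x : V} {A : Set V} (hab : a ≠ b) (haA : a ∉ A)
    (hax : G.Adj a x) :
    {p ∈ pset G a b A | p.getVert 1 = x}.ncard = (pset G x b (insert a A)).ncard := by
  have himg : {p ∈ pset G a b A | p.getVert 1 = x} =
      (fun q => Walk.cons hax q) '' (pset G x b (insert a A)) := by
    ext p
    constructor
    · rintro ⟨⟨hp, hA⟩, h1⟩
      cases p with
      | nil => exact absurd rfl hab
      | @cons _ y _ h q =>
        simp only [Walk.getVert_cons_succ, Walk.getVert_zero] at h1
        subst h1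
        refine ⟨q, ⟨((Walk.cons_isPath_iff _ _).mp hp).1, ?_⟩, rfl⟩
        intro v hv
        rcases hv with rfl | hv
        · exact ((Walk.cons_isPath_iff _ _).mp hp).2
        · intro hmem
          exact hA v hv (by simp [hmem])
    · rintro ⟨q, ⟨hq, hqA⟩, rfl⟩
      refine ⟨⟨(Walk.cons_isPath_iff _ _).mpr ⟨hq, hqA a (Set.mem_insert _ _)⟩, ?_⟩,
        by simp [Walk.getVert_cons_succ, Walk.getVert_zero]⟩
      intro v hv
      simp only [Walk.support_cons, List.mem_cons]
      push_neg
      exact ⟨fun h => haA (h ▸ hv), hqA v (Set.mem_insert_of_mem _ hv)⟩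
  rw [himg, Set.ncard_image_of_injective]
  intro q q' h
  simpa using h

omit [Finite V] in
lemma pset_getVert1_empty {a b x : V} {A : Set V} (hab : a ≠ b)
    (hax : ¬ G.Adj a x) :
    {p ∈ pset G a b A | p.getVert 1 = x} = ∅ := by
  ext p
  simp only [Set.mem_setOf_eq, Set.mem_empty_iff_false, iff_false, not_and]
  intro hp h1
  exact hax (h1 ▸ (getVert1_spec hp hab).1)

section Transfer

variable {W : Type*} {G' : SimpleGraph W}

omit [Finite V] in
lemma exists_lift (f : G →g G') (hinj : Function.Injective f)
    (hrev : ∀ {x y : V}, G'.Adj (f x) (f y) → G.Adj x y)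
    {a' b' : W} (p' : G'.Walk a' b') :
    ∀ {a b : V} (ha : f a = a') (hb : f b = b'),
      (∀ v ∈ p'.support, v ∈ Set.range f) →
      ∃ q : G.Walk a b, q.map f = p'.copy ha.symm hb.symm := by
  induction p' with
  | nil =>
    intro a b ha hb _
    subst ha
    obtain rfl : b = a := hinj hb
    exact ⟨Walk.nil, rfl⟩
  | @cons u w c h t ih =>
    intro a b ha hb hs
    obtain ⟨y, hy⟩ := hs w (by simp)
    subst hy
    subst ha
    have hadj : G.Adj a y := hrev h
    obtain ⟨q, hq⟩ := ih rfl hb (fun v hv => hs v (by simp [hv]))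
    refine ⟨Walk.cons hadj q, ?_⟩
    rw [Walk.map_cons, hq, Walk.copy_cons]

omit [Finite V] in
lemma ncard_transfer (f : G →g G') (hinj : Function.Injective f)
    (hrev : ∀ {x y : V}, G'.Adj (f x) (f y) → G.Adj x y) (a b : V) (A : Set V) :
    (pset G' (f a) (f b) ((Set.range f)ᶜ ∪ f '' A)).ncard = (pset G a b A).ncard := by
  have himg : pset G' (f a) (f b) ((Set.range f)ᶜ ∪ f '' A) =
      (Walk.map f) '' (pset G a b A) := by
    ext p'
    constructor
    · rintro ⟨hp, hA⟩
      obtain ⟨q, hq⟩ := exists_lift f hinj hrev p' rfl rfl (fun v hv => by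
        by_contra hvr
        exact hA v (Set.mem_union_left _ hvr) hv)
      rw [Walk.copy_rfl_rfl] at hq
      rw [← hq] at hp hA
      refine ⟨q, ⟨(Walk.map_isPath_iff_of_injective hinj).mp hp, ?_⟩, hq⟩
      intro v hv hmem
      exact hA (f v) (Set.mem_union_right _ ⟨v, hv, rfl⟩)
        (by rw [Walk.support_map]; exact List.mem_map_of_mem hmem)
    · rintro ⟨q, ⟨hq, hqA⟩, rfl⟩
      refine ⟨Walk.map_isPath_of_injective hinj hq, ?_⟩
      intro v hv hmem
      rw [Walk.support_map] at hmem
      obtain ⟨w', hw', rfl⟩ := List.mem_map.mp hmem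
      rcases hv with hv | ⟨v', hv', he⟩
      · exact hv ⟨w', rfl⟩
      · exact hqA v' hv' (hinj he ▸ hw')
  rw [himg, Set.ncard_image_of_injective _ (Walk.map_injective_of_injective hinj a b)]

end Transfer

omit [Finite V] in
lemma ncard_pset_reverse (a b : V) (A : Set V) :
    (pset G a b A).ncard = (pset G b a A).ncard := by
  have himg : pset G b a A = Walk.reverse '' (pset G a b A) := by
    ext p
    constructor
    · rintro ⟨hp, hA⟩
      exact ⟨p.reverse, ⟨hp.reverse, fun v hv => by
        rw [Walk.support_reverse, List.mem_reverse]; exact hA v hv⟩, p.reverse_reverse⟩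
    · rintro ⟨q, ⟨hq, hqA⟩, rfl⟩
      exact ⟨hq.reverse, fun v hv => by
        rw [Walk.support_reverse, List.mem_reverse]; exact hqA v hv⟩
  rw [himg, Set.ncard_image_of_injective _ Walk.reverse_injective]

omit [Finite V] in
lemma exists_snd {x y : V} (r : G.Walk x y) (h : x ≠ y) :
    ∃ w, G.Adj x w ∧ w ∈ r.support := by
  cases r with
  | nil => exact absurd rfl h
  | cons h' r' => exact ⟨_, h', by simp⟩

omit [Finite V] in
lemma exists_snd_tail {x y : V} (r : G.Walk x y) (h : x ≠ y) :
    ∃ w, G.Adj x w ∧ w ∈ r.support.tail := by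
  cases r with
  | nil => exact absurd rfl h
  | cons h' r' => exact ⟨_, h', by simp⟩

omit [Finite V] in
/-- An interior vertex of a path has two distinct neighbors on the path. -/
lemma interior_two_neighbors {a b v : V} {p : G.Walk a b} (hp : p.IsPath)
    (hv : v ∈ p.support) (hva : v ≠ a) (hvb : v ≠ b) :
    ∃ w z, w ≠ z ∧ G.Adj v w ∧ G.Adj v z ∧ w ∈ p.support ∧ z ∈ p.support := by
  classical
  have hspec : (p.takeUntil v hv).append (p.dropUntil v hv) = p := p.take_spec hv
  obtain ⟨w, hadjw, hw⟩ := exists_snd (p.takeUntil v hv).reverse hva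
  rw [Walk.support_reverse, List.mem_reverse] at hw
  obtain ⟨z, hadjz, hz⟩ := exists_snd_tail (p.dropUntil v hv) hvb
  refine ⟨w, z, ?_, hadjw, hadjz, ?_, ?_⟩
  · rintro rfl
    have hnodup : ((p.takeUntil v hv).support ++ (p.dropUntil v hv).support.tail).Nodup := by
      rw [← Walk.support_append, hspec]; exact hp.support_nodup
    exact (List.disjoint_of_nodup_append hnodup) hw hz
  · rw [← hspec, Walk.mem_support_append_iff]; exact Or.inl hw
  · rw [← hspec, Walk.mem_support_append_iff]
    exact Or.inr (List.mem_of_mem_tail hz)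

section HG
open Sum


lemma hadj_inl_inl {n} {i j : Fin (n+1)} :
    (Hgraph n).Adj (inl i) (inl j) ↔ ((i:ℕ)+1 = j ∨ (j:ℕ)+1 = i) := by
  rw [Hgraph, SimpleGraph.fromRel_adj]
  constructor
  · rintro ⟨-, h | h⟩
    · exact Or.inl h
    · exact Or.inr h
  · intro h
    refine ⟨fun he => ?_, ?_⟩
    · rw [inl.injEq] at he; subst he; omega
    · rcases h with h | h
      · exact Or.inl h
      · exact Or.inr h

lemma hadj_inr_inr {n} {i j : Fin (n+1)} :
    (Hgraph n).Adj (inr i) (inr j) ↔ ((i:ℕ)+1 = j ∨ (j:ℕ)+1 = i) := by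
  rw [Hgraph, SimpleGraph.fromRel_adj]
  constructor
  · rintro ⟨-, h | h⟩
    · exact Or.inl h
    · exact Or.inr h
  · intro h
    refine ⟨fun he => ?_, ?_⟩
    · rw [inr.injEq] at he; subst he; omega
    · rcases h with h | h
      · exact Or.inl h
      · exact Or.inr h

lemma hadj_inl_inr {n} {i j : Fin (n+1)} :
    (Hgraph n).Adj (inl i) (inr j) ↔ ((i:ℕ) ≤ (j:ℕ)+1 ∧ (j:ℕ) ≤ (i:ℕ)+1) := by
  rw [Hgraph, SimpleGraph.fromRel_adj]
  constructor
  · rintro ⟨-, h | h⟩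
    · exact h
    · exact absurd h (by exact fun h => h)
  · intro h
    exact ⟨by simp, Or.inl h⟩

lemma hadj_inr_inl {n} {i j : Fin (n+1)} :
    (Hgraph n).Adj (inr i) (inl j) ↔ ((j:ℕ) ≤ (i:ℕ)+1 ∧ (i:ℕ) ≤ (j:ℕ)+1) := by
  rw [(Hgraph n).adj_comm, hadj_inl_inr]

/-- The involution swapping the two last-column vertices. -/
def sw (n : ℕ) : Fin (n+1) ⊕ Fin (n+1) → Fin (n+1) ⊕ Fin (n+1)
  | .inl i => if (i:ℕ) = n then .inr i else .inl i
  | .inr i => if (i:ℕ) = n then .inl i else .inr i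

lemma sw_sw (n : ℕ) (x) : sw n (sw n x) = x := by
  rcases x with i | i <;> simp only [sw] <;> split_ifs with h <;>
    simp only [sw] <;> simp [h]

lemma sw_injective (n : ℕ) : Function.Injective (sw n) :=
  Function.LeftInverse.injective (sw_sw n)

lemma sw_adj (n : ℕ) {x y} (h : (Hgraph n).Adj x y) :
    (Hgraph n).Adj (sw n x) (sw n y) := by
  rcases x with i | i <;> rcases y with j | j <;>
    simp only [sw] <;> split_ifs with h1 h2 h2 <;>
    simp only [hadj_inl_inl, hadj_inl_inr, hadj_inr_inl, hadj_inr_inr] at h ⊢ <;>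
    omega

lemma sw_adj_iff (n : ℕ) {x y} :
    (Hgraph n).Adj (sw n x) (sw n y) ↔ (Hgraph n).Adj x y :=
  ⟨fun h => by simpa [sw_sw] using sw_adj n h, sw_adj n⟩

/-- `sw` as a graph homomorphism. -/
def swHom (n : ℕ) : Hgraph n →g Hgraph n := ⟨sw n, sw_adj n⟩

/-- The embedding of `Hgraph m` into `Hgraph (m+1)`. -/
def fembFun (m : ℕ) : Fin (m+1) ⊕ Fin (m+1) → Fin (m+2) ⊕ Fin (m+2) :=
  Sum.map Fin.castSucc Fin.castSucc

lemma femb_adj_iff (m : ℕ) {x y} :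
    (Hgraph (m+1)).Adj (fembFun m x) (fembFun m y) ↔ (Hgraph m).Adj x y := by
  rcases x with i | i <;> rcases y with j | j <;>
    simp [fembFun, hadj_inl_inl, hadj_inl_inr, hadj_inr_inl, hadj_inr_inr]

def femb (m : ℕ) : Hgraph m →g Hgraph (m+1) := ⟨fembFun m, (femb_adj_iff m).mpr⟩

lemma femb_injective (m : ℕ) : Function.Injective (fembFun m) :=
  Sum.map_injective.mpr ⟨Fin.castSucc_injective _, Fin.castSucc_injective _⟩

lemma femb_range (m : ℕ) : (Set.range (fembFun m))ᶜ =
    {inl (Fin.last (m+1)), inr (Fin.last (m+1))} := by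
  ext x
  rcases x with i | i <;>
    simp only [Set.mem_compl_iff, Set.mem_range, Set.mem_insert_iff, Set.mem_singleton_iff] <;>
    constructor
  · intro h
    left
    by_contra hne
    have hi : (i:ℕ) < m+1 := by
      have := i.isLt
      rcases Nat.lt_or_ge (i:ℕ) (m+1) with h' | h'
      · exact h'
      · exact absurd (by ext; simp; omega : i = Fin.last (m+1)) (by simpa using hne)
    exact h ⟨inl ⟨i, hi⟩, by simp [fembFun, Fin.ext_iff]⟩
  · rintro (h | h) ⟨y, hy⟩
    · rcases y with k | k
      · rw [inl.injEq] at h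
        subst h
        simp only [fembFun, Sum.map_inl, inl.injEq] at hy
        have := k.isLt
        have := congrArg Fin.val hy
        simp [Fin.val_last] at this
        omega
      · simp [fembFun] at hy
    · exact absurd h (by simp)
  · intro h
    right
    by_contra hne
    have hi : (i:ℕ) < m+1 := by
      have := i.isLt
      rcases Nat.lt_or_ge (i:ℕ) (m+1) with h' | h'
      · exact h'
      · exact absurd (by ext; simp; omega : i = Fin.last (m+1)) (by simpa using hne)
    exact h ⟨inr ⟨i, hi⟩, by simp [fembFun, Fin.ext_iff]⟩
  · rintro (h | h) ⟨y, hy⟩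
    · exact absurd h (by simp)
    · rcases y with k | k
      · simp [fembFun] at hy
      · rw [inr.injEq] at h
        subst h
        simp only [fembFun, Sum.map_inr, inr.injEq] at hy
        have := k.isLt
        have := congrArg Fin.val hy
        simp [Fin.val_last] at this
        omega

end HG
section Counting
open Sum

noncomputable def Pp (n : ℕ) : ℕ :=
  (pset (Hgraph n) (inl (Fin.last n)) (inl 0) ∅).ncard

noncomputable def Qp (n : ℕ) : ℕ :=
  (pset (Hgraph n) (inr (Fin.last n)) (inl 0) ∅).ncard

lemma sw_surjective (n : ℕ) : Function.Surjective (sw n) :=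
  fun x => ⟨sw n x, sw_sw n x⟩

@[simp] lemma swHom_coe (n : ℕ) : ⇑(swHom n) = sw n := rfl
@[simp] lemma femb_coe (m : ℕ) : ⇑(femb m) = fembFun m := rfl

lemma sw_pset (n : ℕ) (a b : Fin (n+1) ⊕ Fin (n+1)) (A : Set (Fin (n+1) ⊕ Fin (n+1))) :
    (pset (Hgraph n) (sw n a) (sw n b) (sw n '' A)).ncard = (pset (Hgraph n) a b A).ncard := by
  have h := ncard_transfer (swHom n) (sw_injective n)
    (fun {x y} h => (sw_adj_iff n).mp h) a b A
  simp only [swHom_coe] at h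
  rwa [Set.range_eq_univ.mpr (sw_surjective n), Set.compl_univ, Set.empty_union] at h

lemma transfer_femb (m : ℕ) (a b : Fin (m+1) ⊕ Fin (m+1)) (A : Set (Fin (m+1) ⊕ Fin (m+1)))
    (S : Set (Fin (m+2) ⊕ Fin (m+2)))
    (hS : S = {inl (Fin.last (m+1)), inr (Fin.last (m+1))} ∪ (fembFun m) '' A) :
    (pset (Hgraph (m+1)) (fembFun m a) (fembFun m b) S).ncard =
      (pset (Hgraph m) a b A).ncard := by
  subst hS
  rw [← femb_range]
  have h := ncard_transfer (femb m) (femb_injective m)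
    (fun {x y} h => (femb_adj_iff m).mp h) a b A
  simpa using h

lemma pset_insert {V : Type*} {G : SimpleGraph V} {a b v : V} {A : Set V} :
    {p ∈ pset G a b A | v ∉ p.support} = pset G a b (insert v A) := by
  ext p
  simp only [Set.mem_setOf_eq, pset, Set.mem_insert_iff]
  constructor
  · rintro ⟨⟨hp, hA⟩, hv⟩
    exact ⟨hp, fun w hw => by rcases hw with rfl | hw; exacts [hv, hA w hw]⟩
  · rintro ⟨hp, hA⟩
    exact ⟨⟨hp, fun w hw => hA w (Or.inr hw)⟩, hA v (Or.inl rfl)⟩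

lemma Pnum_eq_Pp (n : ℕ) : Pnum n = Pp n := by
  have h : {p : (Hgraph n).Walk (Sum.inl 0) (Sum.inl (Fin.last n)) | p.IsPath} =
      pset (Hgraph n) (inl 0) (inl (Fin.last n)) ∅ := by
    ext p; simp [pset]
  rw [Pnum, h, ncard_pset_reverse, Pp]

lemma sw_uL (n : ℕ) : sw n (inl (Fin.last n)) = inr (Fin.last n) := by simp [sw]
lemma sw_vL (n : ℕ) : sw n (inr (Fin.last n)) = inl (Fin.last n) := by simp [sw]
lemma sw_z0 {n : ℕ} (hn : 0 < n) : sw n (inl (0 : Fin (n+1))) = inl 0 := by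
  simp only [sw]; split_ifs with h
  · exact absurd h (by simp; omega)
  · rfl

lemma Qp_eq_Pp {n : ℕ} (hn : 0 < n) : Qp n = Pp n := by
  have h := sw_pset n (inl (Fin.last n)) (inl 0) ∅
  rw [sw_uL, sw_z0 hn, Set.image_empty] at h
  exact h

lemma split2 {V : Type*} [Finite V] {G : SimpleGraph V} {a b x y : V} {A : Set V}
    (hab : a ≠ b) (haA : a ∉ A) (hxy : x ≠ y)
    (hax : G.Adj a x) (hay : G.Adj a y)
    (hmem : ∀ p ∈ pset G a b A, p.getVert 1 = x ∨ p.getVert 1 = y) :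
    (pset G a b A).ncard =
      (pset G x b (insert a A)).ncard + (pset G y b (insert a A)).ncard := by
  have hfin := pset_finite (G := G) a b A
  rw [ncard_split (pset G a b A) hfin (fun p => p.getVert 1 = x)]
  congr 1
  · exact ncard_pset_getVert1 hab haA hax
  · have he : {p ∈ pset G a b A | ¬ p.getVert 1 = x} =
        {p ∈ pset G a b A | p.getVert 1 = y} := by
      ext p
      constructor
      · rintro ⟨hp, hne⟩
        rcases hmem p hp with h | h
        · exact absurd h hne
        · exact ⟨hp, h⟩
      · rintro ⟨hp, he⟩
        exact ⟨hp, by rw [he]; exact fun h => hxy h.symm⟩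
    rw [he, ncard_pset_getVert1 hab haA hay]

lemma split3 {V : Type*} [Finite V] {G : SimpleGraph V} {a b x y z : V} {A : Set V}
    (hab : a ≠ b) (haA : a ∉ A) (hxy : x ≠ y) (hxz : x ≠ z) (hyz : y ≠ z)
    (hax : G.Adj a x) (hay : G.Adj a y) (haz : G.Adj a z)
    (hmem : ∀ p ∈ pset G a b A, p.getVert 1 = x ∨ p.getVert 1 = y ∨ p.getVert 1 = z) :
    (pset G a b A).ncard = (pset G x b (insert a A)).ncard +
      ((pset G y b (insert a A)).ncard + (pset G z b (insert a A)).ncard) := by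
  have hfin := pset_finite (G := G) a b A
  rw [ncard_split (pset G a b A) hfin (fun p => p.getVert 1 = x)]
  congr 1
  · exact ncard_pset_getVert1 hab haA hax
  · have hs : {p ∈ pset G a b A | ¬ p.getVert 1 = x} =
        {p ∈ {p ∈ pset G a b A | ¬ p.getVert 1 = x} | p.getVert 1 = y} ∪
        {p ∈ {p ∈ pset G a b A | ¬ p.getVert 1 = x} | p.getVert 1 = z} := by
      ext p
      constructor
      · rintro ⟨hp, hne⟩
        rcases hmem p hp with h | h | h
        · exact absurd h hne
        · exact Or.inl ⟨⟨hp, hne⟩, h⟩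
        · exact Or.inr ⟨⟨hp, hne⟩, h⟩
      · rintro (⟨hp, -⟩ | ⟨hp, -⟩) <;> exact hp
    rw [hs, Set.ncard_union_eq ?_ ?_ ?_]
    · congr 1
      · have : {p ∈ {p ∈ pset G a b A | ¬ p.getVert 1 = x} | p.getVert 1 = y} =
            {p ∈ pset G a b A | p.getVert 1 = y} := by
          ext p
          constructor
          · rintro ⟨⟨hp, -⟩, h⟩; exact ⟨hp, h⟩
          · rintro ⟨hp, h⟩; exact ⟨⟨hp, by rw [h]; exact fun hc => hxy hc.symm⟩, h⟩
        rw [this, ncard_pset_getVert1 hab haA hay]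
      · have : {p ∈ {p ∈ pset G a b A | ¬ p.getVert 1 = x} | p.getVert 1 = z} =
            {p ∈ pset G a b A | p.getVert 1 = z} := by
          ext p
          constructor
          · rintro ⟨⟨hp, -⟩, h⟩; exact ⟨hp, h⟩
          · rintro ⟨hp, h⟩; exact ⟨⟨hp, by rw [h]; exact fun hc => hxz hc.symm⟩, h⟩
        rw [this, ncard_pset_getVert1 hab haA haz]
    · rw [Set.disjoint_left]
      rintro p ⟨-, h1⟩ ⟨-, h2⟩
      exact hyz (h1 ▸ h2 ▸ rfl)
    · exact (hfin.subset (fun p hp => hp.1.1)).subset (fun p hp => hp)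
    · exact (hfin.subset (fun p hp => hp.1.1)).subset (fun p hp => hp)

open Sum in
lemma lemD1 (m : ℕ) :
    (pset (Hgraph (m+1)) (inl (Fin.last (m+1))) (inl 0) {inr (Fin.last (m+1))}).ncard
      = Pp m + Qp m := by
  have hab : (inl (Fin.last (m+1)) : Fin (m+2) ⊕ Fin (m+2)) ≠ inl 0 := by
    simp [Fin.ext_iff]
  have hsplit := split2 (G := Hgraph (m+1)) (b := (inl 0 : Fin (m+2) ⊕ Fin (m+2)))
    (A := {inr (Fin.last (m+1))})
    (x := inl (⟨m, by omega⟩ : Fin (m+2))) (y := inr (⟨m, by omega⟩ : Fin (m+2)))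
    hab (by simp [Fin.ext_iff]) (by simp)
    (by rw [hadj_inl_inl]; exact Or.inr rfl)
    (by rw [hadj_inl_inr]; simp only [Fin.val_last, Fin.val_mk]; omega)
    ?_
  · rw [hsplit]
    congr 1
    · have := transfer_femb m (inl (Fin.last m)) (inl 0) ∅
        (insert (inl (Fin.last (m+1))) {inr (Fin.last (m+1))}) (by simp)
      exact this
    · have := transfer_femb m (inr (Fin.last m)) (inl 0) ∅
        (insert (inl (Fin.last (m+1))) {inr (Fin.last (m+1))}) (by simp)
      exact this
  · intro p hp
    obtain ⟨hadj, hA, -⟩ := getVert1_spec hp hab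
    rcases h1 : p.getVert 1 with j | j <;> rw [h1] at hadj hA
    · rw [hadj_inl_inl] at hadj
      have := j.isLt
      left
      simp only [inl.injEq, Fin.ext_iff, Fin.val_last] at hadj ⊢
      omega
    · rw [hadj_inl_inr] at hadj
      have := j.isLt
      have hj : (j : ℕ) ≠ m + 1 := by
        intro hc
        exact hA (by simp [Fin.ext_iff, hc])
      right
      simp only [inr.injEq, Fin.ext_iff, Fin.val_last] at hadj ⊢
      omega

open Sum in
lemma lemD2 (m : ℕ) :
    (pset (Hgraph (m+1)) (inr (Fin.last (m+1))) (inl 0) {inl (Fin.last (m+1))}).ncard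
      = Pp m + Qp m := by
  have h := sw_pset (m+1) (inr (Fin.last (m+1))) (inl 0) {inl (Fin.last (m+1))}
  rw [sw_vL, sw_z0 (by omega), Set.image_singleton, sw_uL] at h
  rw [← h]
  exact lemD1 m

/-- Structure lemma: paths from `x` to `c` (avoiding `A`) passing through `w`, where all
neighbors of `w` other than `x, xb` lie in `A`, must start `x, w, xb, …`. -/
lemma lemC {V : Type*} {G : SimpleGraph V} {x xb c w : V} {A : Set V}
    (hxc : x ≠ c) (hwc : w ≠ c) (hwx : w ≠ x) (hxbx : xb ≠ x) (hxbw : xb ≠ w)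
    (hwA : w ∉ A) (hxA : x ∉ A)
    (hadj1 : G.Adj x w) (hadj2 : G.Adj w xb)
    (hnbr : ∀ y, G.Adj w y → y = x ∨ y = xb ∨ y ∈ A) :
    {p ∈ pset G x c A | w ∈ p.support} =
      (fun q => Walk.cons hadj1 (Walk.cons hadj2 q)) '' pset G xb c (insert w (insert x A)) := by
  ext p
  constructor
  · rintro ⟨⟨hp, hA⟩, hw⟩
    cases p with
    | nil => exact absurd rfl hxc
    | @cons _ y _ h q =>
      -- first, the second vertex is `w`
      have hyw : y = w := by
        by_contra hy
        have hwq : w ∈ q.support := by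
          rcases (by simpa using hw : w = x ∨ w ∈ q.support) with h' | h'
          · exact absurd h' hwx
          · exact h'
        obtain ⟨w1, w2, hne, ha1, ha2, hm1, hm2⟩ :=
          interior_two_neighbors (((Walk.cons_isPath_iff _ _).mp hp).1) hwq
            (fun hc => hy hc.symm) hwc
        have hx1 : w1 = xb := by
          rcases hnbr w1 ha1 with h' | h' | h'
          · exact absurd (h' ▸ hm1) ((Walk.cons_isPath_iff _ _).mp hp).2
          · exact h'
          · exact absurd (by simp [hm1]) (hA w1 h')
        have hx2 : w2 = xb := by
          rcases hnbr w2 ha2 with h' | h' | h'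
          · exact absurd (h' ▸ hm2) ((Walk.cons_isPath_iff _ _).mp hp).2
          · exact h'
          · exact absurd (by simp [hm2]) (hA w2 h')
        exact hne (hx1.trans hx2.symm)
      obtain rfl := hyw.symm
      cases q with
      | nil => exact absurd rfl hwc
      | @cons _ z _ h' q' =>
        have hz : z = xb := by
          rcases hnbr z h' with h'' | h'' | h''
          · exact absurd (h'' ▸ (by simp : z ∈ (Walk.cons h' q').support))
              ((Walk.cons_isPath_iff _ _).mp hp).2
          · exact h''
          · exact absurd (by simp : z ∈ (Walk.cons h (Walk.cons h' q')).support)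
              (hA z h'')
        obtain rfl := hz.symm
        have hp1 : (Walk.cons h' q').IsPath := ((Walk.cons_isPath_iff _ _).mp hp).1
        have hxs : x ∉ (Walk.cons h' q').support := ((Walk.cons_isPath_iff _ _).mp hp).2
        have hp2 : q'.IsPath := ((Walk.cons_isPath_iff _ _).mp hp1).1
        have hws : w ∉ q'.support := ((Walk.cons_isPath_iff _ _).mp hp1).2
        refine ⟨q', ⟨hp2, ?_⟩, rfl⟩
        intro v hv
        rcases hv with rfl | hv
        · exact hws
        rcases hv with rfl | hv
        · intro hc
          exact hxs (by simp [hc])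
        · intro hc
          exact hA v hv (by simp [hc])
  · rintro ⟨q, ⟨hq, hqA⟩, rfl⟩
    have hwq : w ∉ q.support := hqA w (Set.mem_insert _ _)
    have hxq : x ∉ q.support := hqA x (Set.mem_insert_of_mem _ (Set.mem_insert _ _))
    refine ⟨⟨?_, ?_⟩, by simp⟩
    · rw [Walk.cons_isPath_iff]
      refine ⟨(Walk.cons_isPath_iff _ _).mpr ⟨hq, hwq⟩, ?_⟩
      simp only [Walk.support_cons, List.mem_cons]
      push_neg
      exact ⟨hwx.symm, hxq⟩
    · intro v hv
      simp only [Walk.support_cons, List.mem_cons]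
      push_neg
      exact ⟨fun hc => hxA (hc ▸ hv), fun hc => hwA (hc ▸ hv),
        hqA v (Set.mem_insert_of_mem _ (Set.mem_insert_of_mem _ hv))⟩

lemma lemC_ncard {V : Type*} [Finite V] {G : SimpleGraph V} {x xb c w : V} {A : Set V}
    (hxc : x ≠ c) (hwc : w ≠ c) (hwx : w ≠ x) (hxbx : xb ≠ x) (hxbw : xb ≠ w)
    (hwA : w ∉ A) (hxA : x ∉ A)
    (hadj1 : G.Adj x w) (hadj2 : G.Adj w xb)
    (hnbr : ∀ y, G.Adj w y → y = x ∨ y = xb ∨ y ∈ A) :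
    {p ∈ pset G x c A | w ∈ p.support}.ncard =
      (pset G xb c (insert w (insert x A))).ncard := by
  rw [lemC hxc hwc hwx hxbx hxbw hwA hxA hadj1 hadj2 hnbr,
    Set.ncard_image_of_injective]
  intro q q' hqq
  simpa using hqq

open Sum in
lemma main_step (m : ℕ) : Pp (m+3) = 4 * Pp (m+2) + 4 * Pp (m+1) := by
  set uL : Fin (m+4) ⊕ Fin (m+4) := inl (Fin.last (m+3)) with huL
  set vL : Fin (m+4) ⊕ Fin (m+4) := inr (Fin.last (m+3)) with hvL
  set uS : Fin (m+4) ⊕ Fin (m+4) := inl ⟨m+2, by omega⟩ with huS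
  set vS : Fin (m+4) ⊕ Fin (m+4) := inr ⟨m+2, by omega⟩ with hvS
  set z0 : Fin (m+4) ⊕ Fin (m+4) := inl 0 with hz0
  have hadj_uL_uS : (Hgraph (m+3)).Adj uL uS := by
    rw [huL, huS, hadj_inl_inl]; exact Or.inr rfl
  have hadj_uL_vS : (Hgraph (m+3)).Adj uL vS := by
    rw [huL, hvS, hadj_inl_inr]
    exact (by constructor <;> omega : m+3 ≤ (m+2)+1 ∧ m+2 ≤ (m+3)+1)
  have hadj_uL_vL : (Hgraph (m+3)).Adj uL vL := by
    rw [huL, hvL, hadj_inl_inr]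
    exact (by constructor <;> omega : m+3 ≤ (m+3)+1 ∧ m+3 ≤ (m+3)+1)
  have hadj_vL_uS : (Hgraph (m+3)).Adj vL uS := by
    rw [hvL, huS, hadj_inr_inl]
    exact (by constructor <;> omega : m+2 ≤ (m+3)+1 ∧ m+3 ≤ (m+2)+1)
  have hadj_vL_vS : (Hgraph (m+3)).Adj vL vS := by
    rw [hvL, hvS, hadj_inr_inr]; exact Or.inr rfl
  have hadj_uS_vL : (Hgraph (m+3)).Adj uS vL := hadj_vL_uS.symm
  have hadj_vS_vL : (Hgraph (m+3)).Adj vS vL := hadj_vL_vS.symm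
  -- neighbors of vL
  have hnbrvL : ∀ y, (Hgraph (m+3)).Adj vL y → y = uS ∨ y = vS ∨ y = uL := by
    intro y hy
    rw [hvL] at hy
    rcases y with j | j
    · rw [hadj_inr_inl] at hy
      have := j.isLt
      simp only [huS, huL, inl.injEq, Fin.ext_iff, Fin.val_mk, Fin.val_last] at hy ⊢
      omega
    · rw [hadj_inr_inr] at hy
      have := j.isLt
      simp only [hvS, inr.injEq, Fin.ext_iff, Fin.val_mk, Fin.val_last] at hy ⊢
      omega
  -- neighbors of uL
  have hnbruL : ∀ y, (Hgraph (m+3)).Adj uL y → y = uS ∨ y = vS ∨ y = vL := by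
    intro y hy
    rw [huL] at hy
    rcases y with j | j
    · rw [hadj_inl_inl] at hy
      have := j.isLt
      simp only [huS, inl.injEq, Fin.ext_iff, Fin.val_mk, Fin.val_last] at hy ⊢
      omega
    · rw [hadj_inl_inr] at hy
      have := j.isLt
      simp only [hvS, hvL, inr.injEq, Fin.ext_iff, Fin.val_mk, Fin.val_last] at hy ⊢
      omega
  have huLz0 : uL ≠ z0 := by simp [huL, hz0, Fin.ext_iff]
  have hvLz0 : vL ≠ z0 := by simp [hvL, hz0]
  have huSz0 : uS ≠ z0 := by simp [huS, hz0, Fin.ext_iff]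
  have hvSz0 : vS ≠ z0 := by simp [hvS, hz0]
  -- Step 1 : the three-way split at uL
  have h1 : Pp (m+3) = (pset (Hgraph (m+3)) uS z0 (insert uL ∅)).ncard +
      ((pset (Hgraph (m+3)) vS z0 (insert uL ∅)).ncard +
       (pset (Hgraph (m+3)) vL z0 (insert uL ∅)).ncard) := by
    refine split3 huLz0 (by simp) (by simp [huS, hvS]) (by simp [huS, hvL])
      (by simp [hvS, hvL, Fin.ext_iff]) hadj_uL_uS hadj_uL_vS hadj_uL_vL ?_
    intro p hp
    obtain ⟨hadj, -, -⟩ := getVert1_spec hp huLz0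
    exact hnbruL _ hadj
  -- T3 : the branch through vL
  have hT3 : (pset (Hgraph (m+3)) vL z0 (insert uL ∅)).ncard = Pp (m+2) + Qp (m+2) := by
    have hs := split2 (G := Hgraph (m+3)) (x := uS) (y := vS) (A := insert uL ∅)
      hvLz0 (by simp [hvL, huL, Fin.ext_iff]) (by simp [huS, hvS]) hadj_vL_uS hadj_vL_vS ?_
    · rw [hs]
      congr 1
      · have := transfer_femb (m+2) (inl (Fin.last (m+2))) (inl 0) ∅
          (insert vL (insert uL ∅)) (by rw [huL, hvL]; ext v; simp; tauto)
        exact this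
      · have := transfer_femb (m+2) (inr (Fin.last (m+2))) (inl 0) ∅
          (insert vL (insert uL ∅)) (by rw [huL, hvL]; ext v; simp; tauto)
        exact this
    · intro p hp
      obtain ⟨hadj, hA, -⟩ := getVert1_spec hp hvLz0
      rcases hnbrvL _ hadj with h | h | h
      · exact Or.inl h
      · exact Or.inr h
      · exact absurd (show p.getVert 1 ∈ insert uL ∅ by
          rw [h]; exact Set.mem_insert _ _) hA
  have hnbrvL' : ∀ y, (Hgraph (m+3)).Adj vL y → y = uS ∨ y = vS ∨ y ∈ (insert uL ∅ : Set (Fin (m+4) ⊕ Fin (m+4))) := by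
    intro y hy
    rcases hnbrvL y hy with h | h | h
    · exact Or.inl h
    · exact Or.inr (Or.inl h)
    · exact Or.inr (Or.inr (h ▸ Set.mem_insert _ _))
  have hnbrvL'' : ∀ y, (Hgraph (m+3)).Adj vL y → y = vS ∨ y = uS ∨ y ∈ (insert uL ∅ : Set (Fin (m+4) ⊕ Fin (m+4))) := by
    intro y hy
    rcases hnbrvL y hy with h | h | h
    · exact Or.inr (Or.inl h)
    · exact Or.inl h
    · exact Or.inr (Or.inr (h ▸ Set.mem_insert _ _))
  have hT1 : (pset (Hgraph (m+3)) uS z0 (insert uL ∅)).ncard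
      = (Pp (m+1) + Qp (m+1)) + Pp (m+2) := by
    have hfin := pset_finite (G := Hgraph (m+3)) uS z0 (insert uL ∅)
    rw [ncard_split _ hfin (fun p => vL ∈ p.support)]
    congr 1
    · rw [lemC_ncard huSz0 hvLz0 (by simp [hvL, huS]) (by simp [huS, vS])
        (by simp [hvS, hvL, Fin.ext_iff]) (by simp [hvL, huL, Fin.ext_iff])
        (by simp [huS, huL, Fin.ext_iff]) hadj_uS_vL hadj_vL_vS hnbrvL']
      have htr := transfer_femb (m+2) (inr (Fin.last (m+2))) (inl 0)
        {inl (Fin.last (m+2))} (insert vL (insert uS (insert uL ∅)))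
        (by
          rw [huL, hvL, huS]
          ext v
          rcases v with j | j <;>
            simp [fembFun, Fin.ext_iff] <;> omega)
      exact htr.trans (lemD2 (m+1))
    · rw [pset_insert]
      have htr := transfer_femb (m+2) (inl (Fin.last (m+2))) (inl 0) ∅
        (insert vL (insert uL ∅))
        (by
          rw [huL, hvL]
          ext v
          rcases v with j | j <;>
            simp [fembFun, Fin.ext_iff] <;> omega)
      exact htr
  have hT2 : (pset (Hgraph (m+3)) vS z0 (insert uL ∅)).ncard
      = (Pp (m+1) + Qp (m+1)) + Qp (m+2) := by
    have hfin := pset_finite (G := Hgraph (m+3)) vS z0 (insert uL ∅)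
    rw [ncard_split _ hfin (fun p => vL ∈ p.support)]
    congr 1
    · rw [lemC_ncard hvSz0 hvLz0 (by simp [hvL, hvS, Fin.ext_iff]) (by simp [huS, vS])
        (by simp [huS, hvL]) (by simp [hvL, huL, Fin.ext_iff])
        (by simp [hvS, huL, Fin.ext_iff]) hadj_vS_vL hadj_vL_uS hnbrvL'']
      have htr := transfer_femb (m+2) (inl (Fin.last (m+2))) (inl 0)
        {inr (Fin.last (m+2))} (insert vL (insert vS (insert uL ∅)))
        (by
          rw [huL, hvL, hvS]
          ext v
          rcases v with j | j <;>
            simp [fembFun, Fin.ext_iff] <;> omega)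
      exact htr.trans (lemD1 (m+1))
    · rw [pset_insert]
      have htr := transfer_femb (m+2) (inr (Fin.last (m+2))) (inl 0) ∅
        (insert vL (insert uL ∅))
        (by
          rw [huL, hvL]
          ext v
          rcases v with j | j <;>
            simp [fembFun, Fin.ext_iff] <;> omega)
      exact htr
  rw [h1, hT1, hT2, hT3, Qp_eq_Pp (by omega : 0 < m+1), Qp_eq_Pp (by omega : 0 < m+2)]
  ring
end Counting

/-- For `n ≥ 3`, `P(n) = 4 P(n-1) + 4 P(n-2)`. -/
theorem Pnum_recurrence (n : ℕ) (hn : 3 ≤ n) :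
    Pnum n = 4 * Pnum (n - 1) + 4 * Pnum (n - 2) := by
  obtain ⟨m, rfl⟩ : ∃ m, n = m + 3 := ⟨n - 3, by omega⟩
  have h1 : m + 3 - 1 = m + 2 := by omega
  have h2 : m + 3 - 2 = m + 1 := by omega
  rw [h1, h2, Pnum_eq_Pp, Pnum_eq_Pp, Pnum_eq_Pp, main_step]
end

section
/- For all integers n ≥ 1, P(n) ≥ (2 + 2√2)^n, where P(n) is the number of paths from u₁ to u_{n+1} in the graph H_n. -/
/-! Paths from `u₁` to `u_{n+1}` can be built column by column. From side `s` of column `i`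
one may step to either side of column `i + 1`, possibly after first switching sides within
column `i` (4 ways, one column used up), or zigzag
`(s, i) → (t, i + 1) → (¬s, i) → (¬t, i + 1) → (r, i + 2)` (4 ways, two columns used up).
Distinct choice sequences give distinct paths, so `P(n) ≥ N(n)` with `N(0) = 1`, `N(1) = 5`
and `N(m + 2) = 4 N(m + 1) + 4 N(m)`; as `x = 2 + 2√2` solves `x² = 4x + 4`, this gives
`N(n) ≥ xⁿ`. -/

theorem pow_le_of_two_step_recurrence {R : Type*} [CommSemiring R] [PartialOrder R]
    [IsOrderedRing R] {x b c : R} (hb : 0 ≤ b) (hc : 0 ≤ c) (hx : x ^ 2 = b * x + c)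
    {a : ℕ → R} (h0 : 1 ≤ a 0) (h1 : x ≤ a 1)
    (ha : ∀ m, b * a (m + 1) + c * a m ≤ a (m + 2)) (m : ℕ) : x ^ m ≤ a m := by
  induction m using Nat.twoStepInduction with
  | zero => simpa using h0
  | one => simpa using h1
  | more m ih0 ih1 =>
    calc x ^ (m + 2) = b * x ^ (m + 1) + c * x ^ m := by rw [pow_add, hx]; ring
      _ ≤ b * a (m + 1) + c * a m := by gcongr
      _ ≤ a (m + 2) := ha m

open SimpleGraph

namespace Hgraph

variable {n : ℕ}

def vert (n : ℕ) (s : Bool) (i : ℕ) (h : i ≤ n) : Fin (n + 1) ⊕ Fin (n + 1) :=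
  cond s (.inr ⟨i, by omega⟩) (.inl ⟨i, by omega⟩)

theorem vert_inj {s t : Bool} {i j : ℕ} {hi : i ≤ n} {hj : j ≤ n} :
    vert n s i hi = vert n t j hj ↔ s = t ∧ i = j := by
  cases s <;> cases t <;> simp [vert]

theorem adj_vert_succ (s t : Bool) {i : ℕ} (h : i + 1 ≤ n) :
    (Hgraph n).Adj (vert n s i (by omega)) (vert n t (i + 1) h) := by
  cases s <;> cases t <;> simp [Hgraph, vert, Fin.ext_iff] <;> omega

theorem adj_vert_not (s : Bool) {i : ℕ} (h : i ≤ n) :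
    (Hgraph n).Adj (vert n s i h) (vert n (!s) i h) := by
  cases s <;> simp [Hgraph, vert]

theorem vert_false_eq_last {i : ℕ} (hi : i = n) :
    vert n false i hi.le = .inl (Fin.last n) := by
  subst hi; rfl

/-- A `PathCode m` read by `toWalk` from side `s` of column `i = n - m`: `step d t` moves to
side `t` of column `i + 1`, first switching sides within column `i` if `d`; `zigzag t r` is the
zigzag to side `r` of column `i + 2`; `zigzagLast` is the zigzag
`(s, n - 1) → vₙ → (¬s, n - 1) → uₙ`; and `done` ends in column `n`, through `vₙ → uₙ` if
needed. -/
inductive PathCode : ℕ → Type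
  | done : PathCode 0
  | zigzagLast : PathCode 1
  | step (detour side : Bool) {m : ℕ} : PathCode m → PathCode (m + 1)
  | zigzag (side next : Bool) {m : ℕ} : PathCode m → PathCode (m + 2)

namespace PathCode

def toWalk : {m : ℕ} → PathCode m → (i : ℕ) → (h : i + m = n) → (s : Bool) →
    (Hgraph n).Walk (vert n s i (by omega)) (.inl (Fin.last n))
  | 0, done, _, h, false => Walk.nil.copy rfl (vert_false_eq_last (by omega))
  | 0, done, _, h, true =>
      (Walk.cons (adj_vert_not true (by omega)) Walk.nil).copy rfl (vert_false_eq_last (by omega))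
  | 1, zigzagLast, _, h, s =>
      (Walk.cons (adj_vert_succ s true (by omega)) <|
        Walk.cons (adj_vert_succ (!s) true (by omega)).symm <|
        Walk.cons (adj_vert_succ (!s) false (by omega)) Walk.nil).copy rfl
        (vert_false_eq_last (by omega))
  | _ + 1, step false t c, i, h, s =>
      Walk.cons (adj_vert_succ s t (by omega)) (c.toWalk (i + 1) (by omega) t)
  | _ + 1, step true t c, i, h, s =>
      Walk.cons (adj_vert_not s (by omega)) <|
        Walk.cons (adj_vert_succ (!s) t (by omega)) (c.toWalk (i + 1) (by omega) t)
  | _ + 2, zigzag t r c, i, h, s =>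
      Walk.cons (adj_vert_succ s t (by omega)) <|
        Walk.cons (adj_vert_succ (!s) t (by omega)).symm <|
        Walk.cons (adj_vert_succ (!s) (!t) (by omega)) <|
        Walk.cons (adj_vert_succ (!t) r (by omega)) (c.toWalk (i + 2) (by omega) r)

variable {m : ℕ}

theorem le_of_vert_mem_support (c : PathCode m) {i : ℕ} (h : i + m = n) (s : Bool) {t : Bool}
    {j : ℕ} {hj : j ≤ n} (hmem : vert n t j hj ∈ (c.toWalk i h s).support) : i ≤ j := by
  induction c generalizing i s with
  | done => cases s <;> simp [toWalk, vert_inj] at hmem <;> omega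
  | zigzagLast => simp [toWalk, vert_inj] at hmem; omega
  | step d t c ih => cases d <;> simp [toWalk, vert_inj] at hmem <;> grind
  | zigzag t r c ih => simp [toWalk, vert_inj] at hmem; grind

theorem vert_notMem_support (c : PathCode m) {i : ℕ} {h : i + m = n} {s t : Bool} {j : ℕ}
    {hj : j ≤ n} (hji : j < i) : vert n t j hj ∉ (c.toWalk i h s).support :=
  fun hmem => (le_of_vert_mem_support c h s hmem).not_gt hji

theorem isPath_toWalk (c : PathCode m) (i : ℕ) (h : i + m = n) (s : Bool) :
    (c.toWalk i h s).IsPath := by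
  induction c generalizing i s with
  | done => cases s <;> simp [toWalk, vert_inj]
  | zigzagLast => cases s <;> simp [toWalk, vert_inj]
  | step d t c ih =>
    cases d <;> simp [toWalk, vert_inj, ih, vert_notMem_support]
  | zigzag t r c ih =>
    simp [toWalk, vert_inj, ih, vert_notMem_support]

theorem side_eq_of_support_eq {m' : ℕ} {c : PathCode m} {c' : PathCode m'} {i : ℕ}
    {h : i + m = n} {h' : i + m' = n} {s s' : Bool}
    (heq : (c.toWalk i h s).support = (c'.toWalk i h' s').support) : s = s' := by
  rw [← Walk.cons_tail_support, ← Walk.cons_tail_support (c'.toWalk i h' s')] at heq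
  exact (vert_inj.mp (List.cons.inj heq).1).1

theorem toWalk_injective (i : ℕ) (h : i + m = n) (s : Bool) :
    Function.Injective fun c : PathCode m => c.toWalk i h s := by
  intro c c' heq
  replace heq := congrArg Walk.support heq
  induction c generalizing i s with
  | done => cases c'; rfl
  | zigzagLast =>
    cases c' with
    | zigzagLast => rfl
    | step d t c' => cases c'; cases d <;> cases t <;> simp [toWalk, vert_inj] at heq
  | step d t c ih =>
    cases c' with
    | zigzagLast => cases c; cases d <;> cases t <;> simp [toWalk, vert_inj] at heq
    | step d' t' c' =>
      cases d <;> cases d' <;> simp [toWalk] at heq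
      · obtain rfl := side_eq_of_support_eq heq
        rw [ih _ _ _ heq]
      · exact (vert_notMem_support c (lt_add_one i) (heq ▸ List.mem_cons_self)).elim
      · exact (vert_notMem_support c' (lt_add_one i) (heq.symm ▸ List.mem_cons_self)).elim
      · obtain rfl := side_eq_of_support_eq heq
        rw [ih _ _ _ heq]
    | zigzag t' r' c' =>
      -- only a zigzag returns to column `i` after reaching column `i + 1`
      cases d <;> simp [toWalk, vert_inj] at heq
      exact (vert_notMem_support c (lt_add_one i)
        (heq ▸ List.mem_cons_of_mem _ List.mem_cons_self)).elim
  | zigzag t r c ih =>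
    cases c' with
    | step d' t' c' =>
      cases d' <;> simp [toWalk, vert_inj] at heq
      exact (vert_notMem_support c' (lt_add_one i)
        (heq.symm ▸ List.mem_cons_of_mem _ List.mem_cons_self)).elim
    | zigzag t' r' c' =>
      simp [toWalk, vert_inj] at heq
      obtain ⟨rfl, heq⟩ := heq
      obtain rfl := side_eq_of_support_eq heq
      rw [ih _ _ _ heq]

def equivZero : PathCode 0 ≃ Unit where
  toFun _ := ()
  invFun _ := done
  left_inv c := by cases c; rfl
  right_inv _ := rfl

def equivOne : PathCode 1 ≃ Option (Bool × Bool) where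
  toFun
    | zigzagLast => none
    | step d t done => some (d, t)
  invFun
    | none => zigzagLast
    | some (d, t) => step d t done
  left_inv c := by
    rcases c with _ | _ | ⟨d, t, ⟨⟩⟩ <;> rfl
  right_inv x := by rcases x with _ | ⟨d, t⟩ <;> rfl

def equivAddTwo (m : ℕ) :
    PathCode (m + 2) ≃ (Bool × Bool × PathCode (m + 1)) ⊕ (Bool × Bool × PathCode m) where
  toFun
    | step d t c => .inl (d, t, c)
    | zigzag t r c => .inr (t, r, c)
  invFun
    | .inl (d, t, c) => step d t c
    | .inr (t, r, c) => zigzag t r c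
  left_inv c := by cases c <;> rfl
  right_inv x := by rcases x with ⟨d, t, c⟩ | ⟨t, r, c⟩ <;> rfl

instance finite : ∀ m, Finite (PathCode m)
  | 0 => .of_equiv _ equivZero.symm
  | 1 => .of_equiv _ equivOne.symm
  | m + 2 =>
    have := finite (m + 1)
    have := finite m
    .of_equiv _ (equivAddTwo m).symm

theorem card_zero : Nat.card (PathCode 0) = 1 := by
  simp [Nat.card_congr equivZero]

theorem card_one : Nat.card (PathCode 1) = 5 := by
  simp [Nat.card_congr equivOne]

theorem card_add_two (m : ℕ) :
    Nat.card (PathCode (m + 2)) = 4 * Nat.card (PathCode (m + 1)) + 4 * Nat.card (PathCode m) := by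
  simp [Nat.card_congr (equivAddTwo m), Nat.card_sum, Nat.card_prod]
  ring

theorem pow_le_card (m : ℕ) : (2 + 2 * √2) ^ m ≤ (Nat.card (PathCode m) : ℝ) := by
  have hsqrt := Real.sq_sqrt (show (0 : ℝ) ≤ 2 by norm_num)
  refine pow_le_of_two_step_recurrence (a := fun m => (Nat.card (PathCode m) : ℝ)) (b := 4)
    (c := 4) (by norm_num) (by norm_num) (by nlinarith) ?_ ?_ (fun m => ?_) m
  · simp [card_zero]
  · push_cast [card_one]
    nlinarith [Real.sqrt_nonneg 2]
  · push_cast [card_add_two]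
    rfl

theorem card_le_Pnum (n : ℕ) : Nat.card (PathCode n) ≤ Pnum n := by
  classical
  rw [Pnum, ← Nat.card_coe_set_eq]
  exact Nat.card_le_card_of_injective (β := (Hgraph n).Path _ _)
    (fun c => ⟨c.toWalk 0 (zero_add n) false, c.isPath_toWalk _ _ _⟩)
    fun c c' heq => toWalk_injective _ _ _ (congrArg Subtype.val heq)

end PathCode
end Hgraph

theorem Pnum_ge_general (n : ℕ) :
    (2 + 2 * Real.sqrt 2) ^ n ≤ (Pnum n : ℝ) :=
  calc (2 + 2 * √2) ^ n ≤ Nat.card (Hgraph.PathCode n) := Hgraph.PathCode.pow_le_card n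
    _ ≤ Pnum n := by exact_mod_cast Hgraph.PathCode.card_le_Pnum n

/-- For `n ≥ 1`, `P(n) ≥ (2 + 2√2)^n`. -/
theorem Pnum_ge (n : ℕ) (hn : 1 ≤ n) :
    (2 + 2 * Real.sqrt 2) ^ n ≤ (Pnum n : ℝ) :=
  Pnum_ge_general n
end
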